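/- arXiv:2604.14911 — 4 statements merged into one kernel-verified Lean document; each statement's English description precedes it below -/
import Mathlib

section
/- Let γ ∈ (0,1], σ ≥ 0, η ≥ 0, β > 0, θ₀ > 0, and let z ≥ 0, with z ∈ [0,1] if γ < 1 and z ∈ [0, θ₀/2) if γ = 1. Then there exist constants C > 0 and θ₁ ∈ (0, θ₀/4] such that for all k ∈ ℤ³ \ {0} and all τ ≥ τ̃ ≥ 0: exp(z·(⟨k, kτ⟩^γ − ⟨k, kτ̃⟩^γ)) · (⟨k, kτ⟩/⟨k, kτ̃⟩)^σ · (⟨τ⟩/⟨τ̃⟩)^η · (τ−τ̃)² · exp(−θ₀·|k|·(τ−τ̃)) · ⟨τ̃⟩^β · ⟨τ⟩^{β/2} ≤ C · exp(−θ₁·(τ−τ̃)) · ⟨τ̃⟩^{3β/2}. -/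
/-- Euclidean norm of `k ∈ ℤ³`. -/
noncomputable def enormZ3 (k : Fin 3 → ℤ) : ℝ := Real.sqrt (∑ i, ((k i : ℝ)) ^ 2)

/-- The Japanese bracket `⟨k, kτ⟩ = sqrt(1 + |k|² + |kτ|²)`. -/
noncomputable def jK (k : Fin 3 → ℤ) (τ : ℝ) : ℝ :=
  Real.sqrt (1 + (∑ i, ((k i : ℝ)) ^ 2) + ∑ i, (τ * (k i : ℝ)) ^ 2)

/-- The Japanese bracket `⟨τ⟩ = sqrt(1 + τ²)`. -/
noncomputable def jt (τ : ℝ) : ℝ := Real.sqrt (1 + τ ^ 2)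

/-- `sqrt(A + (b+c)²) ≤ sqrt(A + b²) + c` for nonneg data. -/
lemma aux_sqrt_shift (A b c : ℝ) (hA : 0 ≤ A) (hb : 0 ≤ b) (hc : 0 ≤ c) :
    Real.sqrt (A + (b + c) ^ 2) ≤ Real.sqrt (A + b ^ 2) + c := by
  have h1 : 0 ≤ Real.sqrt (A + b ^ 2) + c := by positivity
  rw [Real.sqrt_le_iff]
  refine ⟨h1, ?_⟩
  have hbs : b ≤ Real.sqrt (A + b ^ 2) :=
    (Real.le_sqrt hb (by positivity)).mpr (by nlinarith)
  have hsq : Real.sqrt (A + b ^ 2) ^ 2 = A + b ^ 2 := Real.sq_sqrt (by positivity)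
  nlinarith [Real.sqrt_nonneg (A + b ^ 2)]

/-- subadditivity of `x ^ γ` for `0 < γ ≤ 1`. -/
lemma aux_rpow_subadd (a b γ : ℝ) (ha : 0 ≤ a) (hb : 0 ≤ b) (hγ0 : 0 < γ) (hγ1 : γ ≤ 1) :
    (a + b) ^ γ ≤ a ^ γ + b ^ γ := by
  rcases eq_or_lt_of_le (by positivity : (0:ℝ) ≤ a + b) with h | h
  · rw [← h, Real.zero_rpow (ne_of_gt hγ0)]
    positivity
  · have key : ∀ x : ℝ, 0 ≤ x → x ≤ 1 → x ≤ x ^ γ := by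
      intro x hx0 hx1
      have := Real.rpow_le_rpow_of_exponent_ge' hx0 hx1 (le_of_lt hγ0) hγ1
      rwa [Real.rpow_one] at this
    have ha' : a / (a + b) ≤ (a / (a + b)) ^ γ :=
      key _ (by positivity) (by rw [div_le_one h]; linarith)
    have hb' : b / (a + b) ≤ (b / (a + b)) ^ γ :=
      key _ (by positivity) (by rw [div_le_one h]; linarith)
    have hda : (a / (a + b)) ^ γ = a ^ γ / (a + b) ^ γ := Real.div_rpow ha (le_of_lt h) γ
    have hdb : (b / (a + b)) ^ γ = b ^ γ / (a + b) ^ γ := Real.div_rpow hb (le_of_lt h) γ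
    have hs : (0:ℝ) < (a + b) ^ γ := Real.rpow_pos_of_pos h γ
    rw [hda] at ha'; rw [hdb] at hb'
    have : a / (a + b) + b / (a + b) = 1 := by field_simp
    have h2 : (1:ℝ) ≤ a ^ γ / (a + b) ^ γ + b ^ γ / (a + b) ^ γ := by
      rw [← this]; exact add_le_add ha' hb'
    calc (a + b) ^ γ = 1 * (a + b) ^ γ := (one_mul _).symm
      _ ≤ (a ^ γ / (a + b) ^ γ + b ^ γ / (a + b) ^ γ) * (a + b) ^ γ :=
          mul_le_mul_of_nonneg_right h2 (le_of_lt hs)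
      _ = a ^ γ + b ^ γ := by field_simp

/-- `x^γ ≤ 1 + x` for `x ≥ 0`, `0 < γ ≤ 1`. -/
lemma aux_rpow_le_one_add (x γ : ℝ) (hx : 0 ≤ x) (hγ0 : 0 < γ) (hγ1 : γ ≤ 1) :
    x ^ γ ≤ 1 + x := by
  rcases le_or_gt x 1 with h | h
  · have := Real.rpow_le_one hx h (le_of_lt hγ0)
    linarith
  · have := Real.rpow_le_rpow_of_exponent_le (le_of_lt h) hγ1
    rw [Real.rpow_one] at this
    linarith

/-- Young-type: `z * x^γ ≤ (θ₀/2) x + C₀`. -/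
lemma aux_young (γ θ₀ z : ℝ) (hγ0 : 0 < γ) (hγ1 : γ ≤ 1) (hθ₀ : 0 < θ₀)
    (hz0 : 0 ≤ z) (hz1 : γ < 1 → z ≤ 1) (hz2 : γ = 1 → z < θ₀ / 2) :
    ∃ C₀ : ℝ, 0 ≤ C₀ ∧ ∀ x : ℝ, 0 ≤ x → z * x ^ γ ≤ θ₀ / 2 * x + C₀ := by
  rcases eq_or_lt_of_le hγ1 with hγ | hγ
  · refine ⟨0, le_refl _, fun x hx => ?_⟩
    rw [hγ, Real.rpow_one]
    have := hz2 hγ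
    nlinarith
  · -- γ < 1 : scale trick, s := (θ₀/2) ^ (1/(γ-1)), C₀ := s ^ γ
    have hz1' := hz1 hγ
    set s : ℝ := (θ₀ / 2) ^ (1 / (γ - 1)) with hs_def
    have hs : 0 < s := Real.rpow_pos_of_pos (by linarith) _
    refine ⟨s ^ γ, le_of_lt (Real.rpow_pos_of_pos hs γ), fun x hx => ?_⟩
    have key : x ^ γ ≤ s ^ γ + s ^ (γ - 1) * x := by
      have h1 : x ^ γ = s ^ γ * (x / s) ^ γ := by
        rw [← Real.mul_rpow (le_of_lt hs) (div_nonneg hx hs.le)]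
        rw [mul_div_cancel₀ _ (ne_of_gt hs)]
      rw [h1]
      have h2 : (x / s) ^ γ ≤ 1 + x / s :=
        aux_rpow_le_one_add _ _ (div_nonneg hx hs.le) hγ0 hγ1
      have h3 : s ^ γ * (x / s) ^ γ ≤ s ^ γ * (1 + x / s) :=
        mul_le_mul_of_nonneg_left h2 (le_of_lt (Real.rpow_pos_of_pos hs γ))
      have h4 : s ^ γ * (1 + x / s) = s ^ γ + s ^ (γ - 1) * x := by
        rw [Real.rpow_sub hs, Real.rpow_one]
        field_simp
      linarith
    have hse : s ^ (γ - 1) = θ₀ / 2 := by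
      have hne : γ - 1 ≠ 0 := by
        intro h; rw [sub_eq_zero] at h; exact absurd h (ne_of_lt hγ)
      rw [hs_def, ← Real.rpow_mul (by linarith : (0:ℝ) ≤ θ₀ / 2), one_div,
        inv_mul_cancel₀ hne, Real.rpow_one]
    rw [hse] at key
    calc z * x ^ γ ≤ 1 * x ^ γ := mul_le_mul_of_nonneg_right hz1' (Real.rpow_nonneg hx γ)
      _ = x ^ γ := one_mul _
      _ ≤ θ₀ / 2 * x + s ^ γ := by linarith

/-- `1 + δ ≤ (1/c) exp(c δ)` for `0 < c ≤ 1`, `δ ≥ 0`. -/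
lemma aux_one_add_le_exp (c δ : ℝ) (hc0 : 0 < c) (hc1 : c ≤ 1) (hδ : 0 ≤ δ) :
    1 + δ ≤ 1 / c * Real.exp (c * δ) := by
  have h1 : c * δ + 1 ≤ Real.exp (c * δ) := Real.add_one_le_exp _
  have h2 : 1 / c * (c * δ + 1) ≤ 1 / c * Real.exp (c * δ) :=
    mul_le_mul_of_nonneg_left h1 (by positivity)
  have h3 : 1 + δ ≤ 1 / c * (c * δ + 1) := by
    have e : 1 / c * (c * δ + 1) = δ + 1 / c := by field_simp
    have hci : (1:ℝ) ≤ 1 / c := by rw [le_div_iff₀ hc0]; linarith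
    rw [e]
    have e2 : 1 / c * Real.exp (c * δ) = 1 / c * Real.exp (c * δ) := rfl
    nlinarith [Real.exp_pos (c * δ)]
  linarith

/-- Polynomial growth dominated by exponential. -/
lemma aux_poly (p θ : ℝ) (hp : 0 ≤ p) (hθ : 0 < θ) :
    ∃ C₁ : ℝ, 0 < C₁ ∧ ∀ δ : ℝ, 0 ≤ δ → δ ^ 2 * (1 + δ) ^ p ≤ C₁ * Real.exp (θ * δ) := by
  set c : ℝ := min 1 (θ / (p + 2)) with hc_def
  have hc0 : 0 < c := lt_min one_pos (div_pos hθ (by linarith))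
  have hc1 : c ≤ 1 := min_le_left _ _
  have hcp : c * (p + 2) ≤ θ := by
    have : c ≤ θ / (p + 2) := min_le_right _ _
    calc c * (p + 2) ≤ θ / (p + 2) * (p + 2) := mul_le_mul_of_nonneg_right this (by linarith)
      _ = θ := by field_simp
  have hc0' : (0:ℝ) < 1 / c := one_div_pos.mpr hc0
  refine ⟨(1 / c) ^ (p + 2), Real.rpow_pos_of_pos hc0' _, fun δ hδ => ?_⟩
  have h1 : δ ^ 2 * (1 + δ) ^ p ≤ (1 + δ) ^ (p + 2) := by
    have hb : (0:ℝ) < 1 + δ := by linarith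
    rw [Real.rpow_add hb, show (2:ℝ) = ((2:ℕ):ℝ) by norm_num, Real.rpow_natCast]
    rw [mul_comm]
    apply mul_le_mul_of_nonneg_left _ (Real.rpow_nonneg (le_of_lt hb) p)
    exact pow_le_pow_left₀ hδ (by linarith) 2
  have h2 : (1 + δ) ^ (p + 2) ≤ (1 / c * Real.exp (c * δ)) ^ (p + 2) :=
    Real.rpow_le_rpow (by linarith) (aux_one_add_le_exp c δ hc0 hc1 hδ) (by linarith)
  have h3 : (1 / c * Real.exp (c * δ)) ^ (p + 2)
      = (1 / c) ^ (p + 2) * Real.exp (c * δ * (p + 2)) := by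
    rw [Real.mul_rpow hc0'.le (le_of_lt (Real.exp_pos _))]
    rw [← Real.exp_mul]
  have h4 : Real.exp (c * δ * (p + 2)) ≤ Real.exp (θ * δ) := by
    apply Real.exp_le_exp.mpr
    have : c * δ * (p + 2) = c * (p + 2) * δ := by ring
    rw [this]
    exact mul_le_mul_of_nonneg_right hcp hδ
  calc δ ^ 2 * (1 + δ) ^ p ≤ (1 / c) ^ (p + 2) * Real.exp (c * δ * (p + 2)) := by
        rw [← h3]; exact le_trans h1 h2
    _ ≤ (1 / c) ^ (p + 2) * Real.exp (θ * δ) :=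
        mul_le_mul_of_nonneg_left h4 (Real.rpow_nonneg hc0'.le _)

lemma jt_ge_one (τ : ℝ) : 1 ≤ jt τ := by
  rw [jt]
  exact (Real.le_sqrt (by norm_num) (by positivity)).mpr (by nlinarith)

lemma jt_shift (τ' δ : ℝ) (h' : 0 ≤ τ') (hδ : 0 ≤ δ) : jt (τ' + δ) ≤ jt τ' + δ := by
  have := aux_sqrt_shift 1 τ' δ one_pos.le h' hδ
  simpa [jt] using this

lemma jt_mono {a b : ℝ} (ha : 0 ≤ a) (hab : a ≤ b) : jt a ≤ jt b := by
  apply Real.sqrt_le_sqrt; nlinarith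

set_option maxHeartbeats 1000000 in
/-- Kernel weight estimate for the linear Gevrey damping bound (Corollary 3.3). -/
theorem kernel_weight_estimate (γ σ η β θ₀ z : ℝ)
    (hγ0 : 0 < γ) (hγ1 : γ ≤ 1) (hσ : 0 ≤ σ) (hη : 0 ≤ η) (hβ : 0 < β) (hθ₀ : 0 < θ₀)
    (hz0 : 0 ≤ z) (hz1 : γ < 1 → z ≤ 1) (hz2 : γ = 1 → z < θ₀ / 2) :
    ∃ C > (0 : ℝ), ∃ θ₁ : ℝ, 0 < θ₁ ∧ θ₁ ≤ θ₀ / 4 ∧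
      ∀ (k : Fin 3 → ℤ), k ≠ 0 → ∀ τ' τ : ℝ, 0 ≤ τ' → τ' ≤ τ →
        Real.exp (z * (jK k τ ^ γ - jK k τ' ^ γ)) * (jK k τ / jK k τ') ^ σ *
            (jt τ / jt τ') ^ η * (τ - τ') ^ 2 *
            Real.exp (-θ₀ * enormZ3 k * (τ - τ')) * jt τ' ^ β * jt τ ^ (β / 2)
          ≤ C * Real.exp (-θ₁ * (τ - τ')) * jt τ' ^ (3 * β / 2) := by
  obtain ⟨C₀, hC₀0, hC₀⟩ := aux_young γ θ₀ z hγ0 hγ1 hθ₀ hz0 hz1 hz2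
  obtain ⟨C₁, hC₁0, hC₁⟩ := aux_poly (σ + η + β / 2) (θ₀ / 4) (by linarith) (by linarith)
  refine ⟨Real.exp C₀ * C₁, mul_pos (Real.exp_pos _) hC₁0, θ₀ / 4, by linarith, le_refl _, ?_⟩
  intro k hk τ' τ hτ' hττ'
  set δ : ℝ := τ - τ' with hδ_def
  have hδ : 0 ≤ δ := by simp [hδ_def]; linarith
  set S : ℝ := ∑ i, ((k i : ℝ)) ^ 2 with hS_def
  have hS0 : 0 ≤ S := Finset.sum_nonneg fun i _ => sq_nonneg _
  set N : ℝ := enormZ3 k with hN_def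
  have hN2 : N ^ 2 = S := Real.sq_sqrt hS0
  have hN1 : 1 ≤ N := by
    have : ∃ i, k i ≠ 0 := by
      by_contra h
      push_neg at h
      exact hk (funext h)
    obtain ⟨i, hi⟩ := this
    have h1 : (1:ℝ) ≤ ((k i : ℝ)) ^ 2 := by
      have h0 : 1 ≤ |k i| := Int.one_le_abs hi
      have h0' : (1:ℝ) ≤ |(k i : ℝ)| := by
        rw [← Int.cast_abs]; exact_mod_cast h0
      nlinarith [sq_abs ((k i : ℝ)), abs_nonneg ((k i : ℝ))]
    have hle : (1:ℝ) ≤ S := by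
      rw [hS_def]
      calc (1:ℝ) ≤ ((k i : ℝ)) ^ 2 := h1
        _ ≤ ∑ j, ((k j : ℝ)) ^ 2 :=
            Finset.single_le_sum (f := fun j => ((k j : ℝ)) ^ 2)
              (fun j _ => sq_nonneg _) (Finset.mem_univ i)
    rw [hN_def, enormZ3, ← hS_def]
    exact (Real.le_sqrt (by norm_num) hS0).mpr (by nlinarith)
  have hN0 : 0 < N := lt_of_lt_of_le one_pos hN1
  -- jK as sqrt((1+S) + (τ N)^2)
  have hjK_eq : ∀ t : ℝ, jK k t = Real.sqrt ((1 + S) + (t * N) ^ 2) := by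
    intro t
    rw [jK, ← hS_def]
    congr 1
    have : ∑ i, (t * (k i : ℝ)) ^ 2 = t ^ 2 * S := by
      rw [hS_def, Finset.mul_sum]
      apply Finset.sum_congr rfl
      intro i _; ring
    rw [this]
    have : (t * N) ^ 2 = t ^ 2 * S := by rw [mul_pow, hN2]
    rw [this]
  have hjK_ge_N : ∀ t : ℝ, N ≤ jK k t := by
    intro t
    rw [hjK_eq t]
    exact (Real.le_sqrt (le_of_lt hN0) (by positivity)).mpr
      (by rw [hN2]; nlinarith [sq_nonneg (t * N)])
  have hjK_pos : ∀ t : ℝ, 0 < jK k t := fun t => lt_of_lt_of_le hN0 (hjK_ge_N t)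
  have hjK_mono : jK k τ' ≤ jK k τ := by
    rw [hjK_eq, hjK_eq]
    apply Real.sqrt_le_sqrt
    have h0 : τ' * N ≤ τ * N := mul_le_mul_of_nonneg_right hττ' hN0.le
    have : (τ' * N) ^ 2 ≤ (τ * N) ^ 2 :=
      pow_le_pow_left₀ (mul_nonneg hτ' hN0.le) h0 2
    linarith
  have hjK_shift : jK k τ ≤ jK k τ' + N * δ := by
    rw [hjK_eq, hjK_eq]
    have hτeq : τ * N = τ' * N + δ * N := by rw [hδ_def]; ring
    rw [hτeq]
    have := aux_sqrt_shift (1 + S) (τ' * N) (δ * N) (by linarith)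
      (mul_nonneg hτ' (le_of_lt hN0)) (mul_nonneg hδ (le_of_lt hN0))
    calc Real.sqrt (1 + S + (τ' * N + δ * N) ^ 2)
        ≤ Real.sqrt (1 + S + (τ' * N) ^ 2) + δ * N := this
      _ = Real.sqrt (1 + S + (τ' * N) ^ 2) + N * δ := by ring_nf
  have hjt'1 : 1 ≤ jt τ' := jt_ge_one τ'
  have hjt'0 : 0 < jt τ' := lt_of_lt_of_le one_pos hjt'1
  have hjt_shift : jt τ ≤ jt τ' + δ := by
    have : τ = τ' + δ := by rw [hδ_def]; ring
    rw [this]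
    exact jt_shift τ' δ hτ' hδ
  -- Step (a): exponential Gevrey factor
  have ha : Real.exp (z * (jK k τ ^ γ - jK k τ' ^ γ))
      ≤ Real.exp C₀ * Real.exp (θ₀ / 2 * (N * δ)) := by
    rw [← Real.exp_add]
    apply Real.exp_le_exp.mpr
    have h1 : jK k τ ^ γ ≤ jK k τ' ^ γ + (N * δ) ^ γ := by
      calc jK k τ ^ γ ≤ (jK k τ' + N * δ) ^ γ :=
            Real.rpow_le_rpow (le_of_lt (hjK_pos τ)) hjK_shift (le_of_lt hγ0)
        _ ≤ jK k τ' ^ γ + (N * δ) ^ γ :=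
            aux_rpow_subadd _ _ _ (le_of_lt (hjK_pos τ')) (mul_nonneg hN0.le hδ) hγ0 hγ1
    have h2 : z * (jK k τ ^ γ - jK k τ' ^ γ) ≤ z * (N * δ) ^ γ := by
      apply mul_le_mul_of_nonneg_left _ hz0
      linarith
    have h3 := hC₀ (N * δ) (mul_nonneg hN0.le hδ)
    linarith
  -- Step (b): jK ratio
  have hb : (jK k τ / jK k τ') ^ σ ≤ (1 + δ) ^ σ := by
    apply Real.rpow_le_rpow (div_nonneg (hjK_pos τ).le (hjK_pos τ').le) _ hσ
    rw [div_le_iff₀ (hjK_pos τ')]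
    calc jK k τ ≤ jK k τ' + N * δ := hjK_shift
      _ ≤ jK k τ' + jK k τ' * δ := by
          have : N * δ ≤ jK k τ' * δ := mul_le_mul_of_nonneg_right (hjK_ge_N τ') hδ
          linarith
      _ = (1 + δ) * jK k τ' := by ring
  -- Step (c): jt ratio
  have hc : (jt τ / jt τ') ^ η ≤ (1 + δ) ^ η := by
    apply Real.rpow_le_rpow (div_nonneg (by linarith [jt_ge_one τ]) hjt'0.le) _ hη
    rw [div_le_iff₀ hjt'0]
    calc jt τ ≤ jt τ' + δ := hjt_shift
      _ ≤ jt τ' + jt τ' * δ := by nlinarith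
      _ = (1 + δ) * jt τ' := by ring
  -- Step (e): jt τ ^ (β/2)
  have he : jt τ ^ (β / 2) ≤ jt τ' ^ (β / 2) * (1 + δ) ^ (β / 2) := by
    rw [← Real.mul_rpow (le_of_lt hjt'0) (by linarith)]
    apply Real.rpow_le_rpow (by linarith [jt_ge_one τ]) _ (by positivity)
    calc jt τ ≤ jt τ' + δ := hjt_shift
      _ ≤ jt τ' + jt τ' * δ := by nlinarith
      _ = jt τ' * (1 + δ) := by ring
  -- nonnegativity facts
  have n1 : (0:ℝ) ≤ (jK k τ / jK k τ') ^ σ :=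
    Real.rpow_nonneg (div_nonneg (hjK_pos τ).le (hjK_pos τ').le) _
  have n2 : (0:ℝ) ≤ (jt τ / jt τ') ^ η :=
    Real.rpow_nonneg (div_nonneg (by linarith [jt_ge_one τ]) hjt'0.le) _
  have n3 : (0:ℝ) ≤ jt τ' ^ β := Real.rpow_nonneg (le_of_lt hjt'0) _
  have n4 : (0:ℝ) ≤ jt τ ^ (β / 2) :=
    Real.rpow_nonneg (by linarith [jt_ge_one τ]) _
  have n5 : (0:ℝ) ≤ (1 + δ) ^ σ := Real.rpow_nonneg (by linarith) _
  have n6 : (0:ℝ) ≤ (1 + δ) ^ η := Real.rpow_nonneg (by linarith) _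
  have n7 : (0:ℝ) ≤ (1 + δ) ^ (β / 2) := Real.rpow_nonneg (by linarith) _
  have n8 : (0:ℝ) ≤ jt τ' ^ (β / 2) := Real.rpow_nonneg (le_of_lt hjt'0) _
  have hpos1 : (0:ℝ) < 1 + δ := by linarith
  have p0 : (0:ℝ) ≤ Real.exp C₀ * Real.exp (θ₀ / 2 * (N * δ)) := by positivity
  have p1 := mul_nonneg p0 n5
  have p2 := mul_nonneg p1 n6
  have p3 := mul_nonneg p2 (sq_nonneg δ)
  have p4 := mul_nonneg p3 (Real.exp_pos (-θ₀ * N * δ)).le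
  have p5 := mul_nonneg p4 n3
  have step1 :
      Real.exp (z * (jK k τ ^ γ - jK k τ' ^ γ)) * (jK k τ / jK k τ') ^ σ *
          (jt τ / jt τ') ^ η * δ ^ 2 *
          Real.exp (-θ₀ * N * δ) * jt τ' ^ β * jt τ ^ (β / 2)
        ≤ (Real.exp C₀ * Real.exp (θ₀ / 2 * (N * δ))) * (1 + δ) ^ σ *
          (1 + δ) ^ η * δ ^ 2 *
          Real.exp (-θ₀ * N * δ) * jt τ' ^ β * (jt τ' ^ (β / 2) * (1 + δ) ^ (β / 2)) :=
    mul_le_mul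
      (mul_le_mul
        (mul_le_mul
          (mul_le_mul
            (mul_le_mul (mul_le_mul ha hb n1 p0) hc n2 p1)
            (le_refl (δ ^ 2)) (sq_nonneg δ) p2)
          (le_refl (Real.exp (-θ₀ * N * δ))) (Real.exp_pos _).le p3)
        (le_refl (jt τ' ^ β)) n3 p4)
      he n4 p5
  have hregroup :
      (Real.exp C₀ * Real.exp (θ₀ / 2 * (N * δ))) * (1 + δ) ^ σ *
          (1 + δ) ^ η * δ ^ 2 *
          Real.exp (-θ₀ * N * δ) * jt τ' ^ β * (jt τ' ^ (β / 2) * (1 + δ) ^ (β / 2))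
        = Real.exp C₀ * (δ ^ 2 * (1 + δ) ^ (σ + η + β / 2)) *
          (Real.exp (θ₀ / 2 * (N * δ)) * Real.exp (-θ₀ * N * δ)) *
          jt τ' ^ (3 * β / 2) := by
    have e1 : (1 + δ) ^ (σ + η + β / 2) = (1 + δ) ^ σ * (1 + δ) ^ η * (1 + δ) ^ (β / 2) := by
      rw [Real.rpow_add hpos1, Real.rpow_add hpos1]
    have e2 : jt τ' ^ (3 * β / 2) = jt τ' ^ β * jt τ' ^ (β / 2) := by
      rw [← Real.rpow_add hjt'0]
      congr 1; ring
    rw [e1, e2]; ring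
  have step2 :
      Real.exp C₀ * (δ ^ 2 * (1 + δ) ^ (σ + η + β / 2)) *
          (Real.exp (θ₀ / 2 * (N * δ)) * Real.exp (-θ₀ * N * δ)) *
          jt τ' ^ (3 * β / 2)
        ≤ Real.exp C₀ * (C₁ * Real.exp (θ₀ / 4 * δ)) *
          (Real.exp (θ₀ / 2 * (N * δ)) * Real.exp (-θ₀ * N * δ)) *
          jt τ' ^ (3 * β / 2) := by
    apply mul_le_mul_of_nonneg_right _ (Real.rpow_nonneg (le_of_lt hjt'0) _)
    apply mul_le_mul_of_nonneg_right _ (by positivity)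
    exact mul_le_mul_of_nonneg_left (hC₁ δ hδ) (le_of_lt (Real.exp_pos _))
  have step3 :
      Real.exp C₀ * (C₁ * Real.exp (θ₀ / 4 * δ)) *
          (Real.exp (θ₀ / 2 * (N * δ)) * Real.exp (-θ₀ * N * δ)) *
          jt τ' ^ (3 * β / 2)
        ≤ Real.exp C₀ * C₁ * Real.exp (-(θ₀ / 4) * δ) * jt τ' ^ (3 * β / 2) := by
    apply mul_le_mul_of_nonneg_right _ (Real.rpow_nonneg (le_of_lt hjt'0) _)
    have hE : Real.exp (θ₀ / 4 * δ) * (Real.exp (θ₀ / 2 * (N * δ)) * Real.exp (-θ₀ * N * δ))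
        ≤ Real.exp (-(θ₀ / 4) * δ) := by
      rw [← Real.exp_add, ← Real.exp_add]
      apply Real.exp_le_exp.mpr
      have hNδ : δ ≤ N * δ := le_mul_of_one_le_left hδ hN1
      have h2 : θ₀ * δ ≤ θ₀ * (N * δ) := mul_le_mul_of_nonneg_left hNδ hθ₀.le
      clear_value N δ
      nlinarith [h2]
    calc Real.exp C₀ * (C₁ * Real.exp (θ₀ / 4 * δ)) *
          (Real.exp (θ₀ / 2 * (N * δ)) * Real.exp (-θ₀ * N * δ))
        = Real.exp C₀ * C₁ *
          (Real.exp (θ₀ / 4 * δ) * (Real.exp (θ₀ / 2 * (N * δ)) * Real.exp (-θ₀ * N * δ))) := by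
          ring
      _ ≤ Real.exp C₀ * C₁ * Real.exp (-(θ₀ / 4) * δ) := by
          exact mul_le_mul_of_nonneg_left hE (mul_nonneg (Real.exp_pos _).le hC₁0.le)
  calc Real.exp (z * (jK k τ ^ γ - jK k τ' ^ γ)) * (jK k τ / jK k τ') ^ σ *
          (jt τ / jt τ') ^ η * δ ^ 2 *
          Real.exp (-θ₀ * N * δ) * jt τ' ^ β * jt τ ^ (β / 2)
      ≤ (Real.exp C₀ * Real.exp (θ₀ / 2 * (N * δ))) * (1 + δ) ^ σ *
          (1 + δ) ^ η * δ ^ 2 *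
          Real.exp (-θ₀ * N * δ) * jt τ' ^ β * (jt τ' ^ (β / 2) * (1 + δ) ^ (β / 2)) := step1
    _ = Real.exp C₀ * (δ ^ 2 * (1 + δ) ^ (σ + η + β / 2)) *
          (Real.exp (θ₀ / 2 * (N * δ)) * Real.exp (-θ₀ * N * δ)) *
          jt τ' ^ (3 * β / 2) := hregroup
    _ ≤ Real.exp C₀ * (C₁ * Real.exp (θ₀ / 4 * δ)) *
          (Real.exp (θ₀ / 2 * (N * δ)) * Real.exp (-θ₀ * N * δ)) *
          jt τ' ^ (3 * β / 2) := step2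
    _ ≤ Real.exp C₀ * C₁ * Real.exp (-(θ₀ / 4) * δ) * jt τ' ^ (3 * β / 2) := step3
end

section
/- Let γ ∈ (0,1], σ ≥ 0 and z ∈ [0,1]. Then there is a constant C > 0 (depending only on γ and σ) such that for all y, y' ∈ ℝ⁶: |exp(z·⟨y⟩^γ)·⟨y⟩^σ − exp(z·⟨y'⟩^γ)·⟨y'⟩^σ| ≤ C · (⟨y−y'⟩ / (⟨y⟩^{1−γ} + ⟨y'⟩^{1−γ})) · (exp(z·⟨y⟩^γ)·⟨y⟩^σ + exp(z·⟨y'⟩^γ)·⟨y'⟩^σ). -/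
/-! With `F(t) = exp(z t^γ) t^σ = exp(z t^γ + σ log t)` and `1 ≤ a ≤ b`, the bound
`1 - e^{-x} ≤ x`, Bernoulli's inequality `b^γ - a^γ ≤ γ a^{γ-1} (b - a)` and
`log (b/a) ≤ (b - a)/a ≤ a^{γ-1} (b - a)` give `F(b) - F(a) ≤ (zγ + σ) a^{γ-1} (b - a) F(b)`.
If `b ≤ 2a`, then `a^{γ-1}` is at most `3 / (a^{1-γ} + b^{1-γ})`; if `b ≥ 2a`, then
`(b - a) / (a^{1-γ} + b^{1-γ}) ≥ 1/4` and the trivial bound `F(b) - F(a) ≤ F(b)` suffices.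
Apply this to `a, b = ⟨y⟩, ⟨y'⟩`, using `|⟨y⟩ - ⟨y'⟩| ≤ ⟨y - y'⟩`, which holds because
`t ↦ √(1 + t²)` is `1`-Lipschitz. -/

/-- The Japanese bracket `⟨y⟩ = sqrt(1 + |y|²)` of `y ∈ ℝ⁶`. -/
noncomputable def jb6 (y : Fin 6 → ℝ) : ℝ := Real.sqrt (1 + ∑ i, (y i) ^ 2)

/-- The Gevrey multiplier `A(z)_y = exp(z ⟨y⟩^γ) ⟨y⟩^σ` on `ℝ⁶`. -/
noncomputable def gevreyA6 (γ σ z : ℝ) (y : Fin 6 → ℝ) : ℝ :=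
  Real.exp (z * jb6 y ^ γ) * jb6 y ^ σ

open Real

theorem rpow_sub_rpow_le_mul_rpow_sub_one {a b p : ℝ} (ha : 0 < a) (hb : 0 ≤ b) (hp0 : 0 ≤ p)
    (hp1 : p ≤ 1) : b ^ p - a ^ p ≤ p * a ^ (p - 1) * (b - a) := by
  have hs : -1 ≤ (b - a) / a := by rw [le_div_iff₀ ha]; linarith
  have hb_eq : b = a * (1 + (b - a) / a) := by field_simp; ring
  calc b ^ p - a ^ p = a ^ p * (1 + (b - a) / a) ^ p - a ^ p := by
        rw [← mul_rpow ha.le (by linarith), ← hb_eq]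
    _ ≤ a ^ p * (1 + p * ((b - a) / a)) - a ^ p := by
        gcongr; exact rpow_one_add_le_one_add_mul_self hs hp0 hp1
    _ = p * a ^ (p - 1) * (b - a) := by rw [rpow_sub_one ha.ne']; field_simp; ring

theorem rpow_le_two_mul_rpow {a b p : ℝ} (ha : 0 ≤ a) (hb : 0 ≤ b) (hba : b ≤ 2 * a)
    (hp0 : 0 ≤ p) (hp1 : p ≤ 1) : b ^ p ≤ 2 * a ^ p :=
  calc b ^ p ≤ (2 * a) ^ p := rpow_le_rpow hb hba hp0
    _ = 2 ^ p * a ^ p := mul_rpow zero_le_two ha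
    _ ≤ 2 * a ^ p := by
        gcongr; simpa using rpow_le_rpow_of_exponent_le one_le_two hp1

theorem rpow_neg_le_three_div_rpow_add_rpow {a b p : ℝ} (ha : 0 < a) (hb : 0 ≤ b)
    (hba : b ≤ 2 * a) (hp0 : 0 ≤ p) (hp1 : p ≤ 1) :
    a ^ (-p) ≤ 3 / (a ^ p + b ^ p) := by
  have hb' := rpow_le_two_mul_rpow ha.le hb hba hp0 hp1
  rw [le_div_iff₀ (by positivity)]
  calc a ^ (-p) * (a ^ p + b ^ p) ≤ a ^ (-p) * (3 * a ^ p) := by gcongr; linarith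
    _ = 3 := by rw [mul_left_comm, ← rpow_add ha]; norm_num

theorem rpow_add_rpow_le_four_mul_sub {a b p : ℝ} (ha : 0 ≤ a) (hb : 1 ≤ b) (hab : 2 * a ≤ b)
    (hp0 : 0 ≤ p) (hp1 : p ≤ 1) : a ^ p + b ^ p ≤ 4 * (b - a) := by
  have hab' : a ^ p ≤ b ^ p := by gcongr; linarith
  have hb' : b ^ p ≤ b := by simpa using rpow_le_rpow_of_exponent_le hb hp1
  linarith

theorem exp_sub_exp_le_mul_exp (x y : ℝ) : exp y - exp x ≤ (y - x) * exp y := by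
  have h : exp x = exp (x - y) * exp y := by rw [← exp_add, sub_add_cancel]
  nlinarith [add_one_le_exp (x - y), exp_pos y]

theorem abs_sqrt_one_add_sq_sub_sqrt_one_add_sq_le (r s : ℝ) :
    |√(1 + r ^ 2) - √(1 + s ^ 2)| ≤ |r - s| := by
  have hr : |r| ≤ √(1 + r ^ 2) := abs_le_sqrt (by linarith [sq_nonneg r])
  have hs : |s| ≤ √(1 + s ^ 2) := abs_le_sqrt (by linarith [sq_nonneg s])
  have hpos : 0 < √(1 + r ^ 2) + √(1 + s ^ 2) := by positivity
  have hprod : (√(1 + r ^ 2) - √(1 + s ^ 2)) * (√(1 + r ^ 2) + √(1 + s ^ 2))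
      = (r - s) * (r + s) := by
    linear_combination sq_sqrt (by positivity : (0 : ℝ) ≤ 1 + r ^ 2)
      - sq_sqrt (by positivity : (0 : ℝ) ≤ 1 + s ^ 2)
  refine le_of_mul_le_mul_right ?_ hpos
  calc |√(1 + r ^ 2) - √(1 + s ^ 2)| * (√(1 + r ^ 2) + √(1 + s ^ 2))
      = |r - s| * |r + s| := by rw [← abs_of_pos hpos, ← abs_mul, hprod, abs_mul]
    _ ≤ |r - s| * (√(1 + r ^ 2) + √(1 + s ^ 2)) := by
        gcongr; exact (abs_add_le r s).trans (add_le_add hr hs)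

theorem jb6_eq_sqrt_one_add_norm_sq (y : Fin 6 → ℝ) :
    jb6 y = √(1 + ‖WithLp.toLp 2 y‖ ^ 2) := by
  rw [EuclideanSpace.norm_sq_eq]; simp [jb6]

theorem one_le_jb6 (y : Fin 6 → ℝ) : 1 ≤ jb6 y := by
  rw [jb6_eq_sqrt_one_add_norm_sq]
  exact le_sqrt_of_sq_le (by nlinarith [sq_nonneg ‖WithLp.toLp 2 y‖])

theorem abs_jb6_sub_jb6_le (y y' : Fin 6 → ℝ) : |jb6 y - jb6 y'| ≤ jb6 (y - y') := by
  simp only [jb6_eq_sqrt_one_add_norm_sq]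
  calc _ ≤ |‖WithLp.toLp 2 y‖ - ‖WithLp.toLp 2 y'‖| :=
        abs_sqrt_one_add_sq_sub_sqrt_one_add_sq_le _ _
    _ ≤ ‖WithLp.toLp 2 y - WithLp.toLp 2 y'‖ := abs_norm_sub_norm_le _ _
    _ ≤ √(1 + ‖WithLp.toLp 2 (y - y')‖ ^ 2) := by
        rw [WithLp.toLp_sub]; exact le_sqrt_of_sq_le (by linarith)

/-- `gevreyA6 γ σ z y` is `gevreyWeight γ σ z (jb6 y)` by definition. -/
noncomputable def gevreyWeight (γ σ z t : ℝ) : ℝ := exp (z * t ^ γ) * t ^ σ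

section gevreyWeight

variable {γ σ z : ℝ}

theorem gevreyWeight_pos {t : ℝ} (ht : 0 < t) : 0 < gevreyWeight γ σ z t := by
  unfold gevreyWeight; positivity

theorem gevreyWeight_eq_exp {t : ℝ} (ht : 0 < t) :
    gevreyWeight γ σ z t = exp (z * t ^ γ + σ * log t) := by
  rw [gevreyWeight, rpow_def_of_pos ht σ, ← exp_add, mul_comm (log t)]

theorem gevreyWeight_le_gevreyWeight (hγ : 0 ≤ γ) (hσ : 0 ≤ σ) (hz : 0 ≤ z) {a b : ℝ}
    (ha : 0 ≤ a) (hab : a ≤ b) : gevreyWeight γ σ z a ≤ gevreyWeight γ σ z b := by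
  unfold gevreyWeight; gcongr

theorem gevreyWeight_sub_le (hγ0 : 0 ≤ γ) (hγ1 : γ ≤ 1) (hσ : 0 ≤ σ) (hz : 0 ≤ z) {a b : ℝ}
    (ha : 1 ≤ a) (hab : a ≤ b) :
    gevreyWeight γ σ z b - gevreyWeight γ σ z a
      ≤ (z * γ + σ) * a ^ (γ - 1) * (b - a) * gevreyWeight γ σ z b := by
  have ha0 : 0 < a := by linarith
  have hb0 : 0 < b := by linarith
  have hpow : b ^ γ - a ^ γ ≤ γ * a ^ (γ - 1) * (b - a) :=
    rpow_sub_rpow_le_mul_rpow_sub_one ha0 hb0.le hγ0 hγ1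
  have hlog : log b - log a ≤ a ^ (γ - 1) * (b - a) :=
    calc log b - log a = log (b / a) := (log_div hb0.ne' ha0.ne').symm
      _ ≤ b / a - 1 := log_le_sub_one_of_pos (by positivity)
      _ = a ^ (-1 : ℝ) * (b - a) := by rw [rpow_neg_one]; field_simp
      _ ≤ a ^ (γ - 1) * (b - a) := by gcongr; linarith
  rw [gevreyWeight_eq_exp ha0, gevreyWeight_eq_exp hb0]
  refine (exp_sub_exp_le_mul_exp _ _).trans (mul_le_mul_of_nonneg_right ?_ (exp_pos _).le)
  nlinarith [mul_le_mul_of_nonneg_left hpow hz, mul_le_mul_of_nonneg_left hlog hσ]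

theorem abs_gevreyWeight_sub_le (hγ0 : 0 ≤ γ) (hγ1 : γ ≤ 1) (hσ : 0 ≤ σ) (hz : 0 ≤ z)
    {a b d : ℝ} (ha : 1 ≤ a) (hb : 1 ≤ b) (hd : |a - b| ≤ d) :
    |gevreyWeight γ σ z a - gevreyWeight γ σ z b|
      ≤ 4 * (1 + z * γ + σ) * (d / (a ^ (1 - γ) + b ^ (1 - γ))) *
          (gevreyWeight γ σ z a + gevreyWeight γ σ z b) := by
  wlog hab : a ≤ b generalizing a b
  · have h := this hb ha (by rwa [abs_sub_comm]) (le_of_not_ge hab)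
    rwa [abs_sub_comm, add_comm (b ^ _), add_comm (gevreyWeight γ σ z b)] at h
  set F := gevreyWeight γ σ z
  set S := a ^ (1 - γ) + b ^ (1 - γ)
  have ha0 : 0 < a := by linarith
  have hb0 : 0 < b := by linarith
  have hS : 0 < S := by positivity
  have hd0 : 0 ≤ d / S := div_nonneg ((abs_nonneg _).trans hd) hS.le
  have hba : b - a ≤ d := by rw [abs_sub_comm] at hd; exact (le_abs_self _).trans hd
  have hFa : 0 < F a := gevreyWeight_pos ha0
  have hFb : 0 < F b := gevreyWeight_pos hb0
  have hK : 0 ≤ z * γ + σ := by nlinarith [mul_nonneg hz hγ0]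
  have hFab : F a ≤ F b := gevreyWeight_le_gevreyWeight hγ0 hσ hz ha0.le hab
  rw [abs_sub_comm, abs_of_nonneg (sub_nonneg.2 hFab)]
  suffices F b - F a ≤ 4 * (1 + z * γ + σ) * (d / S) * F b by
    nlinarith [mul_nonneg (mul_nonneg hK hd0) hFa.le, mul_nonneg hd0 hFa.le]
  rcases le_total b (2 * a) with hnear | hfar
  · have hpow : a ^ (γ - 1) ≤ 3 / S := by
      simpa using
        rpow_neg_le_three_div_rpow_add_rpow ha0 hb0.le hnear (sub_nonneg.2 hγ1) (by linarith)
    calc F b - F a ≤ (z * γ + σ) * a ^ (γ - 1) * (b - a) * F b :=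
          gevreyWeight_sub_le hγ0 hγ1 hσ hz ha hab
      _ ≤ (z * γ + σ) * (3 / S) * d * F b := by gcongr
      _ = 3 * (z * γ + σ) * (d / S) * F b := by ring
      _ ≤ 4 * (1 + z * γ + σ) * (d / S) * F b := by gcongr ?_ * _ * _; linarith
  · have hSd : S ≤ 4 * d := by
      have := rpow_add_rpow_le_four_mul_sub ha0.le hb hfar (sub_nonneg.2 hγ1) (by linarith)
      linarith
    have hone : 1 ≤ 4 * (d / S) := by rw [← mul_div_assoc, le_div_iff₀ hS]; linarith
    calc F b - F a ≤ 1 * F b := by linarith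
      _ ≤ 4 * (d / S) * F b := by gcongr
      _ ≤ 4 * (1 + z * γ + σ) * (d / S) * F b := by gcongr ?_ * _ * _; linarith

end gevreyWeight

theorem gevreyA_difference_estimate_general (γ σ z : ℝ)
    (hγ0 : 0 < γ) (hγ1 : γ ≤ 1) (hσ : 0 ≤ σ) (hz0 : 0 ≤ z) :
    ∃ C > (0 : ℝ), ∀ y y' : Fin 6 → ℝ,
      |gevreyA6 γ σ z y - gevreyA6 γ σ z y'|
        ≤ C * (jb6 (y - y') / (jb6 y ^ (1 - γ) + jb6 y' ^ (1 - γ))) *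
            (gevreyA6 γ σ z y + gevreyA6 γ σ z y') :=
  ⟨4 * (1 + z * γ + σ), by nlinarith [mul_nonneg hz0 hγ0.le], fun y y' =>
    abs_gevreyWeight_sub_le hγ0.le hγ1 hσ hz0 (one_le_jb6 y) (one_le_jb6 y')
      (abs_jb6_sub_jb6_le y y')⟩

/-- Taylor-type difference estimate for the Gevrey multiplier (from the proof
of Lemma 4.1): `|A(z)_y − A(z)_{y'}| ≲ ⟨y−y'⟩/(⟨y⟩^{1−γ}+⟨y'⟩^{1−γ}) ·
(A(z)_y + A(z)_{y'})`. -/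
theorem gevreyA_difference_estimate (γ σ z : ℝ)
    (hγ0 : 0 < γ) (hγ1 : γ ≤ 1) (hσ : 0 ≤ σ) (hz0 : 0 ≤ z) (hz1 : z ≤ 1) :
    ∃ C > (0 : ℝ), ∀ y y' : Fin 6 → ℝ,
      |gevreyA6 γ σ z y - gevreyA6 γ σ z y'|
        ≤ C * (jb6 (y - y') / (jb6 y ^ (1 - γ) + jb6 y' ^ (1 - γ))) *
            (gevreyA6 γ σ z y + gevreyA6 γ σ z y') :=
  gevreyA_difference_estimate_general γ σ z hγ0 hγ1 hσ hz0
end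

section
/- Let γ ∈ (0,1], σ > 1 and z ∈ [0,1]. Then there is a constant C > 0 (depending only on γ and σ) such that for all τ ≥ 0, all k, l ∈ ℤ³ and all ξ ∈ ℝ³: |ξ − kτ| · |A(z)_{k,ξ} − A(z)_{k−l, ξ−lτ}| / (A(z)_{l, lτ} · A(z)_{k−l, ξ−lτ}) ≤ C · ⟨τ⟩ · (⟨k−l⟩^{1−σ} + ⟨l⟩^{1−σ}) · ⟨k, ξ⟩^{γ/2} · ⟨k−l, ξ−lτ⟩^{γ/2}. -/
/-- The Japanese bracket `⟨k, ξ⟩ = sqrt(1 + |k|² + |ξ|²)` for `k ∈ ℤ³`, `ξ ∈ ℝ³`. -/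
noncomputable def jb3 (k : Fin 3 → ℤ) (ξ : Fin 3 → ℝ) : ℝ :=
  Real.sqrt (1 + (∑ i, ((k i : ℝ)) ^ 2) + ∑ i, (ξ i) ^ 2)

/-- The Japanese bracket `⟨k⟩ = sqrt(1 + |k|²)` of `k ∈ ℤ³`. -/
noncomputable def jz3 (k : Fin 3 → ℤ) : ℝ := Real.sqrt (1 + ∑ i, ((k i : ℝ)) ^ 2)

/-- Euclidean norm on `ℝ³`. -/
noncomputable def enormR3 (v : Fin 3 → ℝ) : ℝ := Real.sqrt (∑ i, (v i) ^ 2)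

/-- The Gevrey Fourier multiplier `A(z)_{k,ξ} = exp(z ⟨k,ξ⟩^γ) ⟨k,ξ⟩^σ`. -/
noncomputable def gevreyA3 (γ σ z : ℝ) (k : Fin 3 → ℤ) (ξ : Fin 3 → ℝ) : ℝ :=
  Real.exp (z * jb3 k ξ ^ γ) * jb3 k ξ ^ σ


open Real NNReal Finset

lemma sqrt_sum_sq_add_le {ι : Type*} [Fintype ι] (f g : ι → ℝ) :
    Real.sqrt (∑ i, (f i + g i) ^ 2) ≤ Real.sqrt (∑ i, f i ^ 2) + Real.sqrt (∑ i, g i ^ 2) := by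
  set a := Real.sqrt (∑ i, f i ^ 2) with ha
  set b := Real.sqrt (∑ i, g i ^ 2) with hb
  have ha0 : 0 ≤ a := Real.sqrt_nonneg _
  have hb0 : 0 ≤ b := Real.sqrt_nonneg _
  have ha2 : a ^ 2 = ∑ i, f i ^ 2 := Real.sq_sqrt (by positivity)
  have hb2 : b ^ 2 = ∑ i, g i ^ 2 := Real.sq_sqrt (by positivity)
  have hcs : ∑ i, f i * g i ≤ a * b := Real.sum_mul_le_sqrt_mul_sqrt _ _ _
  have hexp : ∑ i, (f i + g i) ^ 2 ≤ (a + b) ^ 2 := by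
    have : ∑ i, (f i + g i) ^ 2 = (∑ i, f i ^ 2) + 2 * (∑ i, f i * g i) + ∑ i, g i ^ 2 := by
      rw [Finset.mul_sum, ← Finset.sum_add_distrib, ← Finset.sum_add_distrib]
      exact Finset.sum_congr rfl fun i _ => by ring
    rw [this]
    nlinarith [hcs, ha2, hb2]
  calc Real.sqrt (∑ i, (f i + g i) ^ 2) ≤ Real.sqrt ((a + b) ^ 2) :=
        Real.sqrt_le_sqrt hexp
    _ = a + b := Real.sqrt_sq (by positivity)

lemma bracket_triangle {a b c : ℝ} (ha : 0 ≤ a) (hb : 0 ≤ b) (hc : 0 ≤ c)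
    (h : Real.sqrt a ≤ Real.sqrt b + Real.sqrt c) :
    Real.sqrt (1 + a) ≤ Real.sqrt (1 + b) + Real.sqrt (1 + c) := by
  have hsa : Real.sqrt a ^ 2 = a := Real.sq_sqrt ha
  have hsb : Real.sqrt b ^ 2 = b := Real.sq_sqrt hb
  have hsc : Real.sqrt c ^ 2 = c := Real.sq_sqrt hc
  set sb := Real.sqrt b; set sc := Real.sqrt c
  have hp2 : Real.sqrt (1 + b) ^ 2 = 1 + b := Real.sq_sqrt (by positivity)
  have hq2 : Real.sqrt (1 + c) ^ 2 = 1 + c := Real.sq_sqrt (by positivity)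
  have hpb : sb ≤ Real.sqrt (1 + b) := Real.sqrt_le_sqrt (by linarith)
  have hqc : sc ≤ Real.sqrt (1 + c) := Real.sqrt_le_sqrt (by linarith)
  have h1 : 1 + a ≤ (Real.sqrt (1 + b) + Real.sqrt (1 + c)) ^ 2 := by
    have ha' : a ≤ (sb + sc) ^ 2 := by
      have := Real.sqrt_nonneg a
      nlinarith [h]
    nlinarith [Real.sqrt_nonneg b, Real.sqrt_nonneg c, Real.sqrt_nonneg (1+b),
      Real.sqrt_nonneg (1+c), mul_le_mul hpb hqc (Real.sqrt_nonneg c) (Real.sqrt_nonneg (1+b))]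
  calc Real.sqrt (1 + a) ≤ Real.sqrt ((Real.sqrt (1 + b) + Real.sqrt (1 + c)) ^ 2) :=
        Real.sqrt_le_sqrt h1
    _ = _ := Real.sqrt_sq (by positivity)

/-- Triangle inequality for `jb3`. -/

lemma jb3_triangle (a b : Fin 3 → ℤ) (u v : Fin 3 → ℝ) :
    jb3 (a + b) (u + v) ≤ jb3 a u + jb3 b v := by
  have h := sqrt_sum_sq_add_le (Sum.elim (fun i => ((a i : ℝ))) u)
      (Sum.elim (fun i => ((b i : ℝ))) v)
  rw [Fintype.sum_sum_type, Fintype.sum_sum_type, Fintype.sum_sum_type] at h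
  simp only [Sum.elim_inl, Sum.elim_inr] at h
  unfold jb3
  rw [add_assoc, add_assoc, add_assoc]
  have goalsum : (∑ i, (((a + b) i : ℝ)) ^ 2) + ∑ i, ((u + v) i) ^ 2
      = (∑ i, ((a i : ℝ) + (b i : ℝ)) ^ 2) + ∑ i, (u i + v i) ^ 2 := by
    congr 1
    all_goals exact Finset.sum_congr rfl fun i _ => by push_cast [Pi.add_apply]; ring
  rw [goalsum]
  exact bracket_triangle (by positivity) (by positivity) (by positivity) h

lemma gevrey_diff_le (γ σ z : ℝ) (hγ0 : 0 < γ) (hγ1 : γ ≤ 1) (hσ : 1 < σ)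
    (hz0 : 0 ≤ z) (hz1 : z ≤ 1) {X Y M : ℝ} (hX : 1 ≤ X) (hY : 1 ≤ Y)
    (hXM : X ≤ M) (hYM : Y ≤ M) :
    |Real.exp (z * X ^ γ) * X ^ σ - Real.exp (z * Y ^ γ) * Y ^ σ|
      ≤ (γ + σ) * Real.exp (z * M ^ γ) * M ^ (σ + γ - 1) * |X - Y| := by
  have hM1 : (1:ℝ) ≤ M := le_trans hX hXM
  set f : ℝ → ℝ := fun t => Real.exp (z * t ^ γ) * t ^ σ with hf
  set f' : ℝ → ℝ := fun t =>
    Real.exp (z * t ^ γ) * (z * (γ * t ^ (γ - 1))) * t ^ σ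
      + Real.exp (z * t ^ γ) * (σ * t ^ (σ - 1)) with hf'
  set K : ℝ := (γ + σ) * Real.exp (z * M ^ γ) * M ^ (σ + γ - 1) with hK
  have hderiv : ∀ t ∈ Set.Icc (1:ℝ) M, HasDerivWithinAt f (f' t) (Set.Icc (1:ℝ) M) t := by
    intro t ht
    have ht0 : (0:ℝ) < t := lt_of_lt_of_le zero_lt_one ht.1
    have h1 : HasDerivAt (fun t : ℝ => t ^ γ) (γ * t ^ (γ - 1)) t :=
      Real.hasDerivAt_rpow_const (Or.inl (ne_of_gt ht0))
    have h3 : HasDerivAt (fun t : ℝ => Real.exp (z * t ^ γ))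
        (Real.exp (z * t ^ γ) * (z * (γ * t ^ (γ - 1)))) t := (h1.const_mul z).exp
    have h4 : HasDerivAt (fun t : ℝ => t ^ σ) (σ * t ^ (σ - 1)) t :=
      Real.hasDerivAt_rpow_const (Or.inl (ne_of_gt ht0))
    exact (h3.mul h4).hasDerivWithinAt
  have hbound : ∀ t ∈ Set.Icc (1:ℝ) M, ‖f' t‖ ≤ K := by
    intro t ht
    have ht1 : (1:ℝ) ≤ t := ht.1
    have ht0 : (0:ℝ) < t := lt_of_lt_of_le zero_lt_one ht1
    have htM : t ≤ M := ht.2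
    have hEt : Real.exp (z * t ^ γ) ≤ Real.exp (z * M ^ γ) := by
      apply Real.exp_le_exp.2
      apply mul_le_mul_of_nonneg_left _ hz0
      exact Real.rpow_le_rpow ht0.le htM hγ0.le
    have hP1 : t ^ ((γ - 1) + σ) ≤ M ^ (σ + γ - 1) := by
      rw [show (γ - 1) + σ = σ + γ - 1 by ring]
      exact Real.rpow_le_rpow ht0.le htM (by linarith)
    have hP2 : t ^ (σ - 1) ≤ M ^ (σ + γ - 1) := by
      calc t ^ (σ - 1) ≤ M ^ (σ - 1) := Real.rpow_le_rpow ht0.le htM (by linarith)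
        _ ≤ M ^ (σ + γ - 1) := Real.rpow_le_rpow_of_exponent_le hM1 (by linarith)
    have hsplit : f' t = z * γ * (Real.exp (z * t ^ γ) * t ^ ((γ - 1) + σ))
        + σ * (Real.exp (z * t ^ γ) * t ^ (σ - 1)) := by
      rw [hf']
      rw [Real.rpow_add ht0]
      ring
    have hEP1 : Real.exp (z * t ^ γ) * t ^ ((γ - 1) + σ)
        ≤ Real.exp (z * M ^ γ) * M ^ (σ + γ - 1) :=
      mul_le_mul hEt hP1 (Real.rpow_nonneg ht0.le _) (Real.exp_pos _).le
    have hEP2 : Real.exp (z * t ^ γ) * t ^ (σ - 1)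
        ≤ Real.exp (z * M ^ γ) * M ^ (σ + γ - 1) :=
      mul_le_mul hEt hP2 (Real.rpow_nonneg ht0.le _) (Real.exp_pos _).le
    have hb1 : z * γ * (Real.exp (z * t ^ γ) * t ^ ((γ - 1) + σ))
        ≤ γ * (Real.exp (z * M ^ γ) * M ^ (σ + γ - 1)) := by
      have hzγ : z * γ ≤ γ := by nlinarith
      apply mul_le_mul hzγ hEP1 (by positivity) hγ0.le
    have hb2 : σ * (Real.exp (z * t ^ γ) * t ^ (σ - 1))
        ≤ σ * (Real.exp (z * M ^ γ) * M ^ (σ + γ - 1)) :=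
      mul_le_mul_of_nonneg_left hEP2 (by linarith)
    have hnn : 0 ≤ f' t := by
      rw [hsplit]; positivity
    rw [Real.norm_eq_abs, abs_of_nonneg hnn, hsplit, hK]
    calc z * γ * (Real.exp (z * t ^ γ) * t ^ ((γ - 1) + σ))
          + σ * (Real.exp (z * t ^ γ) * t ^ (σ - 1))
        ≤ γ * (Real.exp (z * M ^ γ) * M ^ (σ + γ - 1))
          + σ * (Real.exp (z * M ^ γ) * M ^ (σ + γ - 1)) := add_le_add hb1 hb2
      _ = (γ + σ) * Real.exp (z * M ^ γ) * M ^ (σ + γ - 1) := by ring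
  have := (convex_Icc (1:ℝ) M).norm_image_sub_le_of_norm_hasDerivWithin_le
    hderiv hbound ⟨hY, hYM⟩ ⟨hX, hXM⟩
  simpa [Real.norm_eq_abs, hf] using this

lemma one_le_jb3 (k : Fin 3 → ℤ) (ξ : Fin 3 → ℝ) : 1 ≤ jb3 k ξ := by
  have h1 : (0:ℝ) ≤ ∑ i, ((k i : ℝ)) ^ 2 := by positivity
  have h2 : (0:ℝ) ≤ ∑ i, (ξ i) ^ 2 := by positivity
  have h := Real.sqrt_le_sqrt (show (1:ℝ) ≤ 1 + (∑ i, ((k i : ℝ)) ^ 2) + ∑ i, (ξ i) ^ 2 by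
    linarith)
  rwa [Real.sqrt_one] at h

lemma one_le_jz3 (k : Fin 3 → ℤ) : 1 ≤ jz3 k := by
  have h1 : (0:ℝ) ≤ ∑ i, ((k i : ℝ)) ^ 2 := by positivity
  have h := Real.sqrt_le_sqrt (show (1:ℝ) ≤ 1 + ∑ i, ((k i : ℝ)) ^ 2 by linarith)
  rwa [Real.sqrt_one] at h

/-- real version of rpow subadditivity for exponents in (0,1] -/

lemma real_rpow_add_le (a b p : ℝ) (ha : 0 ≤ a) (hb : 0 ≤ b) (hp0 : 0 ≤ p) (hp1 : p ≤ 1) :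
    (a + b) ^ p ≤ a ^ p + b ^ p := by
  have h := NNReal.rpow_add_le_add_rpow a.toNNReal b.toNNReal hp0 hp1
  have hcast : ((a.toNNReal + b.toNNReal : ℝ≥0) : ℝ) = a + b := by
    push_cast [Real.coe_toNNReal a ha, Real.coe_toNNReal b hb]; ring
  calc (a + b) ^ p = (((a.toNNReal + b.toNNReal : ℝ≥0) : ℝ)) ^ p := by rw [hcast]
    _ = (((a.toNNReal + b.toNNReal) ^ p : ℝ≥0) : ℝ) := by
        rw [← NNReal.coe_rpow]
    _ ≤ ((a.toNNReal ^ p + b.toNNReal ^ p : ℝ≥0) : ℝ) := by exact_mod_cast h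
    _ = a ^ p + b ^ p := by
        rw [NNReal.coe_add, NNReal.coe_rpow, NNReal.coe_rpow, Real.coe_toNNReal a ha,
          Real.coe_toNNReal b hb]

/-- The main commutator weight bound in the proof of Lemma 4.1:
`|ξ−kτ| |A(z)_{k,ξ} − A(z)_{k−l,ξ−lτ}| / (A(z)_{l,lτ} A(z)_{k−l,ξ−lτ})
 ≤ C ⟨τ⟩ (⟨k−l⟩^{1−σ} + ⟨l⟩^{1−σ}) ⟨k,ξ⟩^{γ/2} ⟨k−l,ξ−lτ⟩^{γ/2}`. -/
theorem commutator_weight_estimate (γ σ z : ℝ)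
    (hγ0 : 0 < γ) (hγ1 : γ ≤ 1) (hσ : 1 < σ) (hz0 : 0 ≤ z) (hz1 : z ≤ 1) :
    ∃ C > (0 : ℝ), ∀ τ : ℝ, 0 ≤ τ → ∀ (k l : Fin 3 → ℤ) (ξ : Fin 3 → ℝ),
      enormR3 (fun i => ξ i - τ * (k i : ℝ)) *
          |gevreyA3 γ σ z k ξ - gevreyA3 γ σ z (k - l) (fun i => ξ i - τ * (l i : ℝ))| /
          (gevreyA3 γ σ z l (fun i => τ * (l i : ℝ)) *
            gevreyA3 γ σ z (k - l) (fun i => ξ i - τ * (l i : ℝ)))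
        ≤ C * jt τ * (jz3 (k - l) ^ (1 - σ) + jz3 l ^ (1 - σ)) *
            jb3 k ξ ^ (γ / 2) *
            jb3 (k - l) (fun i => ξ i - τ * (l i : ℝ)) ^ (γ / 2) := by
  have hσ0 : (0:ℝ) < σ := by linarith
  set C : ℝ := 2 * (3:ℝ) ^ σ + 2 * (2:ℝ) ^ σ
      + 2 * (γ + σ) * (2:ℝ) ^ (σ + γ - 1) * (2:ℝ) ^ (γ / 2) + 1 with hCdef
  have hC0 : 0 < C := by positivity
  refine ⟨C, hC0, ?_⟩
  intro τ hτ k l ξ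
  simp only [gevreyA3]
  set ξ' : Fin 3 → ℝ := fun i => ξ i - τ * (l i : ℝ) with hξ'
  set lτ : Fin 3 → ℝ := fun i => τ * (l i : ℝ) with hlτv
  set X : ℝ := jb3 k ξ with hXdef
  set Y : ℝ := jb3 (k - l) ξ' with hYdef
  set L : ℝ := jb3 l lτ with hLdef
  -- basic positivity facts
  have hX1 : 1 ≤ X := one_le_jb3 k ξ
  have hY1 : 1 ≤ Y := one_le_jb3 (k - l) ξ'
  have hL1 : 1 ≤ L := one_le_jb3 l lτ
  have hX0 : (0:ℝ) < X := lt_of_lt_of_le one_pos hX1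
  have hY0 : (0:ℝ) < Y := lt_of_lt_of_le one_pos hY1
  have hL0 : (0:ℝ) < L := lt_of_lt_of_le one_pos hL1
  have hjt0 : (0:ℝ) ≤ jt τ := Real.sqrt_nonneg _
  have hjt1 : (1:ℝ) ≤ jt τ := by
    have h := Real.sqrt_le_sqrt (show (1:ℝ) ≤ 1 + τ ^ 2 by nlinarith)
    rwa [Real.sqrt_one] at h
  have hjtτ : τ ≤ jt τ := by
    have h := Real.sqrt_le_sqrt (show τ ^ 2 ≤ 1 + τ ^ 2 by nlinarith)
    rwa [Real.sqrt_sq hτ] at h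
  -- triangle inequalities
  have hXY : X ≤ Y + L := by
    have h := jb3_triangle (k - l) l ξ' lτ
    have e1 : k - l + l = k := sub_add_cancel k l
    have e2 : ξ' + lτ = ξ := by funext i; simp [hξ', hlτv]
    rwa [e1, e2] at h
  have hYX : Y ≤ X + L := by
    have h := jb3_triangle k (-l) ξ (-lτ)
    have e1 : k + -l = k - l := (sub_eq_add_neg k l).symm
    have e2 : ξ + -lτ = ξ' := by funext i; simp [hξ', hlτv]; ring
    have e3 : jb3 (-l) (-lτ) = L := by
      rw [hLdef]
      unfold jb3
      have s1 : (∑ i, (((-l) i : ℝ)) ^ 2) = ∑ i, ((l i : ℝ)) ^ 2 :=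
        Finset.sum_congr rfl fun i _ => by push_cast [Pi.neg_apply]; ring
      have s2 : (∑ i, ((-lτ) i) ^ 2) = ∑ i, (lτ i) ^ 2 :=
        Finset.sum_congr rfl fun i _ => by simp [Pi.neg_apply]
      rw [s1, s2]
    rwa [e1, e2, e3] at h
  have habsXY : |X - Y| ≤ L := abs_sub_le_iff.2 ⟨by linarith, by linarith⟩
  -- bracket comparisons
  have hYgeP : jz3 (k - l) ≤ Y := by
    rw [hYdef]; unfold jz3 jb3
    apply Real.sqrt_le_sqrt
    have : (0:ℝ) ≤ ∑ i, (ξ' i) ^ 2 := by positivity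
    linarith
  have hLgeQ : jz3 l ≤ L := by
    rw [hLdef]; unfold jz3 jb3
    apply Real.sqrt_le_sqrt
    have : (0:ℝ) ≤ ∑ i, (lτ i) ^ 2 := by positivity
    linarith
  have hjzP0 : (0:ℝ) < jz3 (k - l) := lt_of_lt_of_le one_pos (one_le_jz3 _)
  have hjzQ0 : (0:ℝ) < jz3 l := lt_of_lt_of_le one_pos (one_le_jz3 _)
  set P : ℝ := jz3 (k - l) ^ (1 - σ) with hPdef
  set Q : ℝ := jz3 l ^ (1 - σ) with hQdef
  have hP0 : 0 ≤ P := Real.rpow_nonneg hjzP0.le _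
  have hQ0 : 0 ≤ Q := Real.rpow_nonneg hjzQ0.le _
  -- bound on the velocity factor
  have hN : enormR3 (fun i => ξ i - τ * (k i : ℝ)) ≤ 2 * jt τ * Y := by
    have h := sqrt_sum_sq_add_le ξ' (fun i => -(τ * (((k - l) i : ℝ))))
    have e1 : (∑ i, (ξ' i + -(τ * (((k - l) i : ℝ)))) ^ 2)
        = ∑ i, (ξ i - τ * (k i : ℝ)) ^ 2 :=
      Finset.sum_congr rfl fun i _ => by
        simp only [hξ', Pi.sub_apply]
        push_cast
        ring
    have e2 : (∑ i, (-(τ * (((k - l) i : ℝ)))) ^ 2)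
        = τ ^ 2 * ∑ i, (((k - l) i : ℝ)) ^ 2 := by
      rw [Finset.mul_sum]
      exact Finset.sum_congr rfl fun i _ => by ring
    have e3 : Real.sqrt (τ ^ 2 * ∑ i, (((k - l) i : ℝ)) ^ 2)
        = τ * Real.sqrt (∑ i, (((k - l) i : ℝ)) ^ 2) := by
      rw [Real.sqrt_mul (sq_nonneg τ), Real.sqrt_sq hτ]
    rw [e1] at h
    rw [e2, e3] at h
    have hs1 : Real.sqrt (∑ i, (ξ' i) ^ 2) ≤ Y := by
      rw [hYdef]; unfold jb3
      apply Real.sqrt_le_sqrt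
      have : (0:ℝ) ≤ ∑ i, (((k - l) i : ℝ)) ^ 2 := by positivity
      linarith
    have hs2 : Real.sqrt (∑ i, (((k - l) i : ℝ)) ^ 2) ≤ Y := by
      rw [hYdef]; unfold jb3
      apply Real.sqrt_le_sqrt
      have : (0:ℝ) ≤ ∑ i, (ξ' i) ^ 2 := by positivity
      linarith
    have : enormR3 (fun i => ξ i - τ * (k i : ℝ))
        ≤ Y + τ * Y := by
      unfold enormR3
      calc Real.sqrt (∑ i, (ξ i - τ * (k i : ℝ)) ^ 2)
          ≤ Real.sqrt (∑ i, (ξ' i) ^ 2) + τ * Real.sqrt (∑ i, (((k - l) i : ℝ)) ^ 2) := h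
        _ ≤ Y + τ * Y := add_le_add hs1 (mul_le_mul_of_nonneg_left hs2 hτ)
    calc enormR3 (fun i => ξ i - τ * (k i : ℝ)) ≤ Y + τ * Y := this
      _ = (1 + τ) * Y := by ring
      _ ≤ (2 * jt τ) * Y := by
          apply mul_le_mul_of_nonneg_right _ hY0.le
          linarith
      _ = 2 * jt τ * Y := by ring
  -- exponential subadditivity
  have hEX : Real.exp (z * X ^ γ) ≤ Real.exp (z * L ^ γ) * Real.exp (z * Y ^ γ) := by
    rw [← Real.exp_add]
    apply Real.exp_le_exp.2
    have h1 : X ^ γ ≤ (Y + L) ^ γ := Real.rpow_le_rpow hX0.le hXY hγ0.le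
    have h2 : (Y + L) ^ γ ≤ Y ^ γ + L ^ γ := real_rpow_add_le Y L γ hY0.le hL0.le hγ0.le hγ1
    have h3 : X ^ γ ≤ L ^ γ + Y ^ γ := by linarith
    calc z * X ^ γ ≤ z * (L ^ γ + Y ^ γ) := mul_le_mul_of_nonneg_left h3 hz0
      _ = z * L ^ γ + z * Y ^ γ := by ring
  -- denominator
  set EL : ℝ := Real.exp (z * L ^ γ) with hELdef
  set EY : ℝ := Real.exp (z * Y ^ γ) with hEYdef
  have hEL0 : 0 < EL := Real.exp_pos _
  have hEY0 : 0 < EY := Real.exp_pos _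
  have hEL1 : 1 ≤ EL := Real.one_le_exp (by positivity)
  have hD0 : (0:ℝ) < EL * L ^ σ * (EY * Y ^ σ) := by
    have := Real.rpow_pos_of_pos hL0 σ
    have := Real.rpow_pos_of_pos hY0 σ
    positivity
  rw [div_le_iff₀ hD0]
  have hx1 : (1:ℝ) ≤ X ^ (γ / 2) := Real.one_le_rpow hX1 (by positivity)
  have hy1 : (1:ℝ) ≤ Y ^ (γ / 2) := Real.one_le_rpow hY1 (by positivity)
  have hYσ0 : (0:ℝ) ≤ Y ^ σ := Real.rpow_nonneg hY0.le _
  have hLσ0 : (0:ℝ) ≤ L ^ σ := Real.rpow_nonneg hL0.le _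
  rcases le_total Y (2 * L) with hc | hc
  · -- Case A : Y ≤ 2 L, crude bound
    have hXL : X ≤ 3 * L := by linarith
    have hyy : Y ^ (-σ) * Y ^ σ = 1 := by
      rw [← Real.rpow_add hY0]
      norm_num
    have hAX : Real.exp (z * X ^ γ) * X ^ σ
        ≤ (3:ℝ) ^ σ * Y ^ (-σ) * (EL * L ^ σ * (EY * Y ^ σ)) := by
      have hXσ : X ^ σ ≤ (3:ℝ) ^ σ * L ^ σ := by
        rw [← Real.mul_rpow (by norm_num) hL0.le]
        exact Real.rpow_le_rpow hX0.le hXL hσ0.le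
      have h1 : Real.exp (z * X ^ γ) * X ^ σ ≤ (EL * EY) * ((3:ℝ) ^ σ * L ^ σ) :=
        mul_le_mul hEX hXσ (Real.rpow_nonneg hX0.le _) (by positivity)
      have h2 : (3:ℝ) ^ σ * Y ^ (-σ) * (EL * L ^ σ * (EY * Y ^ σ))
          = (EL * EY) * ((3:ℝ) ^ σ * L ^ σ) * (Y ^ (-σ) * Y ^ σ) := by ring
      rw [h2, hyy, mul_one]
      exact h1
    have hAY : EY * Y ^ σ ≤ (2:ℝ) ^ σ * Y ^ (-σ) * (EL * L ^ σ * (EY * Y ^ σ)) := by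
      have hLσ : Y ^ σ / (2:ℝ) ^ σ ≤ L ^ σ := by
        rw [← Real.div_rpow hY0.le (by norm_num)]
        exact Real.rpow_le_rpow (by linarith) (by linarith) hσ0.le
      have h1 : (1:ℝ) ≤ (2:ℝ) ^ σ * Y ^ (-σ) * (EL * L ^ σ) := by
        have e : (2:ℝ) ^ σ * Y ^ (-σ) * (Y ^ σ / (2:ℝ) ^ σ)
            = (Y ^ (-σ) * Y ^ σ) * ((2:ℝ) ^ σ / (2:ℝ) ^ σ) := by ring
        have h2σ0 : (0:ℝ) < (2:ℝ) ^ σ := Real.rpow_pos_of_pos (by norm_num) _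
        calc (1:ℝ) = (2:ℝ) ^ σ * Y ^ (-σ) * (Y ^ σ / (2:ℝ) ^ σ) := by
              rw [e, hyy, one_mul, div_self (ne_of_gt h2σ0)]
          _ ≤ (2:ℝ) ^ σ * Y ^ (-σ) * (1 * L ^ σ) := by
              apply mul_le_mul_of_nonneg_left _ (by positivity)
              rw [one_mul]; exact hLσ
          _ ≤ (2:ℝ) ^ σ * Y ^ (-σ) * (EL * L ^ σ) := by
              apply mul_le_mul_of_nonneg_left _ (by positivity)
              exact mul_le_mul_of_nonneg_right hEL1 hLσ0
      calc EY * Y ^ σ = 1 * (EY * Y ^ σ) := (one_mul _).symm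
        _ ≤ ((2:ℝ) ^ σ * Y ^ (-σ) * (EL * L ^ σ)) * (EY * Y ^ σ) :=
            mul_le_mul_of_nonneg_right h1 (by positivity)
        _ = (2:ℝ) ^ σ * Y ^ (-σ) * (EL * L ^ σ * (EY * Y ^ σ)) := by ring
    have hΔ : |Real.exp (z * X ^ γ) * X ^ σ - EY * Y ^ σ|
        ≤ ((3:ℝ) ^ σ + (2:ℝ) ^ σ) * Y ^ (-σ) * (EL * L ^ σ * (EY * Y ^ σ)) := by
      calc |Real.exp (z * X ^ γ) * X ^ σ - EY * Y ^ σ|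
          ≤ |Real.exp (z * X ^ γ) * X ^ σ| + |EY * Y ^ σ| := abs_sub _ _
        _ = Real.exp (z * X ^ γ) * X ^ σ + EY * Y ^ σ := by
            rw [abs_of_nonneg (by positivity), abs_of_nonneg (by positivity)]
        _ ≤ (3:ℝ) ^ σ * Y ^ (-σ) * (EL * L ^ σ * (EY * Y ^ σ))
            + (2:ℝ) ^ σ * Y ^ (-σ) * (EL * L ^ σ * (EY * Y ^ σ)) := add_le_add hAX hAY
        _ = ((3:ℝ) ^ σ + (2:ℝ) ^ σ) * Y ^ (-σ) * (EL * L ^ σ * (EY * Y ^ σ)) := by ring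
    have hstep : enormR3 (fun i => ξ i - τ * (k i : ℝ)) *
        |Real.exp (z * X ^ γ) * X ^ σ - EY * Y ^ σ|
        ≤ (2 * jt τ * Y) *
          (((3:ℝ) ^ σ + (2:ℝ) ^ σ) * Y ^ (-σ) * (EL * L ^ σ * (EY * Y ^ σ))) :=
      mul_le_mul hN hΔ (abs_nonneg _) (by positivity)
    have hY1σ : Y * Y ^ (-σ) = Y ^ (1 - σ) := by
      rw [show (1:ℝ) - σ = 1 + -σ by ring, Real.rpow_add hY0, Real.rpow_one]
    have hPY : Y ^ (1 - σ) ≤ P := Real.rpow_le_rpow_of_nonpos hjzP0 hYgeP (by linarith)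
    have hfinal : (2 * jt τ * Y) *
        (((3:ℝ) ^ σ + (2:ℝ) ^ σ) * Y ^ (-σ) * (EL * L ^ σ * (EY * Y ^ σ)))
        ≤ C * jt τ * (P + Q) * X ^ (γ / 2) * Y ^ (γ / 2)
            * (EL * L ^ σ * (EY * Y ^ σ)) := by
      have hcoef : 2 * ((3:ℝ) ^ σ + (2:ℝ) ^ σ) ≤ C := by
        have h1 : (0:ℝ) ≤ 2 * (γ + σ) * (2:ℝ) ^ (σ + γ - 1) * (2:ℝ) ^ (γ / 2) := by
          positivity
        rw [hCdef]; linarith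
      have hPQ : Y ^ (1 - σ) ≤ P + Q := by linarith
      have h1 : (2 * ((3:ℝ) ^ σ + (2:ℝ) ^ σ)) * Y ^ (1 - σ) ≤ C * (P + Q) :=
        mul_le_mul hcoef hPQ (Real.rpow_nonneg hY0.le _) hC0.le
      have h2 : (2 * ((3:ℝ) ^ σ + (2:ℝ) ^ σ)) * Y ^ (1 - σ)
          * (jt τ * (EL * L ^ σ * (EY * Y ^ σ)))
          ≤ C * (P + Q) * (jt τ * (EL * L ^ σ * (EY * Y ^ σ))) :=
        mul_le_mul_of_nonneg_right h1 (by positivity)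
      have h3 : C * (P + Q) * (jt τ * (EL * L ^ σ * (EY * Y ^ σ)))
          ≤ C * (P + Q) * (jt τ * (EL * L ^ σ * (EY * Y ^ σ))) * (X ^ (γ / 2) * Y ^ (γ / 2)) := by
        apply le_mul_of_one_le_right
        · have : (0:ℝ) ≤ P + Q := by linarith
          positivity
        · calc (1:ℝ) = 1 * 1 := by norm_num
            _ ≤ X ^ (γ / 2) * Y ^ (γ / 2) := mul_le_mul hx1 hy1 (by norm_num)
                (by positivity)
      calc (2 * jt τ * Y) *
          (((3:ℝ) ^ σ + (2:ℝ) ^ σ) * Y ^ (-σ) * (EL * L ^ σ * (EY * Y ^ σ)))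
          = (2 * ((3:ℝ) ^ σ + (2:ℝ) ^ σ)) * (Y * Y ^ (-σ))
            * (jt τ * (EL * L ^ σ * (EY * Y ^ σ))) := by ring
        _ = (2 * ((3:ℝ) ^ σ + (2:ℝ) ^ σ)) * Y ^ (1 - σ)
            * (jt τ * (EL * L ^ σ * (EY * Y ^ σ))) := by rw [hY1σ]
        _ ≤ C * (P + Q) * (jt τ * (EL * L ^ σ * (EY * Y ^ σ))) := h2
        _ ≤ C * (P + Q) * (jt τ * (EL * L ^ σ * (EY * Y ^ σ)))
            * (X ^ (γ / 2) * Y ^ (γ / 2)) := h3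
        _ = C * jt τ * (P + Q) * X ^ (γ / 2) * Y ^ (γ / 2)
            * (EL * L ^ σ * (EY * Y ^ σ)) := by ring
    exact le_trans hstep hfinal
  · -- Case B : 2 L ≤ Y, mean value theorem
    have hYX2 : Y ≤ 2 * X := by linarith
    set Mx : ℝ := max X Y with hMxdef
    have hXMx : X ≤ Mx := le_max_left _ _
    have hYMx : Y ≤ Mx := le_max_right _ _
    have hMx0 : (0:ℝ) < Mx := lt_of_lt_of_le hX0 hXMx
    have hMVT := gevrey_diff_le γ σ z hγ0 hγ1 hσ hz0 hz1 hX1 hY1 hXMx hYMx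
    have hEMx : Real.exp (z * Mx ^ γ) ≤ EL * EY := by
      rw [hELdef, hEYdef, ← Real.exp_add]
      apply Real.exp_le_exp.2
      have hMxYL : Mx ≤ Y + L := max_le hXY (by linarith)
      have h1 : Mx ^ γ ≤ (Y + L) ^ γ := Real.rpow_le_rpow hMx0.le hMxYL hγ0.le
      have h2 : (Y + L) ^ γ ≤ Y ^ γ + L ^ γ := real_rpow_add_le Y L γ hY0.le hL0.le hγ0.le hγ1
      have h3 : Mx ^ γ ≤ L ^ γ + Y ^ γ := by linarith
      calc z * Mx ^ γ ≤ z * (L ^ γ + Y ^ γ) := mul_le_mul_of_nonneg_left h3 hz0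
        _ = z * L ^ γ + z * Y ^ γ := by ring
    have hMxpow : Mx ^ (σ + γ - 1) ≤ (2:ℝ) ^ (σ + γ - 1) * Y ^ (σ + γ - 1) := by
      have hMx2Y : Mx ≤ 2 * Y := max_le (by linarith) (by linarith)
      rw [← Real.mul_rpow (by norm_num) hY0.le]
      exact Real.rpow_le_rpow hMx0.le hMx2Y (by linarith)
    have hΔ : |Real.exp (z * X ^ γ) * X ^ σ - EY * Y ^ σ|
        ≤ (γ + σ) * (EL * EY) * ((2:ℝ) ^ (σ + γ - 1) * Y ^ (σ + γ - 1)) * L := by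
      calc |Real.exp (z * X ^ γ) * X ^ σ - EY * Y ^ σ|
          ≤ (γ + σ) * Real.exp (z * Mx ^ γ) * Mx ^ (σ + γ - 1) * |X - Y| := hMVT
        _ ≤ (γ + σ) * (EL * EY) * ((2:ℝ) ^ (σ + γ - 1) * Y ^ (σ + γ - 1)) * L := by
            have hb1 : (γ + σ) * Real.exp (z * Mx ^ γ) ≤ (γ + σ) * (EL * EY) :=
              mul_le_mul_of_nonneg_left hEMx (by positivity)
            have hb2 : (γ + σ) * Real.exp (z * Mx ^ γ) * Mx ^ (σ + γ - 1)
                ≤ (γ + σ) * (EL * EY) * ((2:ℝ) ^ (σ + γ - 1) * Y ^ (σ + γ - 1)) :=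
              mul_le_mul hb1 hMxpow (Real.rpow_nonneg hMx0.le _) (by positivity)
            exact mul_le_mul hb2 habsXY (abs_nonneg _) (by positivity)
    have hstep : enormR3 (fun i => ξ i - τ * (k i : ℝ)) *
        |Real.exp (z * X ^ γ) * X ^ σ - EY * Y ^ σ|
        ≤ (2 * jt τ * Y) *
          ((γ + σ) * (EL * EY) * ((2:ℝ) ^ (σ + γ - 1) * Y ^ (σ + γ - 1)) * L) :=
      mul_le_mul hN hΔ (abs_nonneg _) (by positivity)
    -- rpow bookkeeping
    have e2 : Y ^ (γ / 2) * Y ^ (γ / 2) * Y ^ σ = Y * Y ^ (σ + γ - 1) := by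
      rw [← Real.rpow_add hY0, ← Real.rpow_add hY0]
      rw [show Y * Y ^ (σ + γ - 1) = Y ^ (1:ℝ) * Y ^ (σ + γ - 1) by rw [Real.rpow_one]]
      rw [← Real.rpow_add hY0]
      rw [show γ / 2 + γ / 2 + σ = 1 + (σ + γ - 1) by ring]
    have e3 : L ^ (1 - σ) * L ^ σ = L := by
      rw [← Real.rpow_add hL0]
      norm_num
    have hXγ2 : Y ^ (γ / 2) ≤ (2:ℝ) ^ (γ / 2) * X ^ (γ / 2) := by
      rw [← Real.mul_rpow (by norm_num) hX0.le]
      exact Real.rpow_le_rpow hY0.le hYX2 (by positivity)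
    have hQL : L ^ (1 - σ) ≤ Q := Real.rpow_le_rpow_of_nonpos hjzQ0 hLgeQ (by linarith)
    set K : ℝ := 2 * (γ + σ) * (2:ℝ) ^ (σ + γ - 1) with hKdef
    have hK0 : 0 ≤ K := by positivity
    have hclaim1 : (2 * jt τ * Y) *
        ((γ + σ) * (EL * EY) * ((2:ℝ) ^ (σ + γ - 1) * Y ^ (σ + γ - 1)) * L)
        ≤ (K * (2:ℝ) ^ (γ / 2)) * jt τ * L ^ (1 - σ) * X ^ (γ / 2) * Y ^ (γ / 2)
            * (EL * L ^ σ * (EY * Y ^ σ)) := by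
      have hbase : (0:ℝ) ≤ K * jt τ * (EL * EY) * L ^ (1 - σ) * L ^ σ
          * (Y ^ (γ / 2) * Y ^ σ) := by
        have := Real.rpow_nonneg hL0.le (1 - σ)
        positivity
      have hmul := mul_le_mul_of_nonneg_left hXγ2 hbase
      calc (2 * jt τ * Y) *
          ((γ + σ) * (EL * EY) * ((2:ℝ) ^ (σ + γ - 1) * Y ^ (σ + γ - 1)) * L)
          = (K * jt τ * (EL * EY) * L ^ (1 - σ) * L ^ σ * (Y ^ (γ / 2) * Y ^ σ))
            * (Y ^ (γ / 2)) := by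
            linear_combination
              (-(2 * (γ + σ) * (2:ℝ) ^ (σ + γ - 1) * (jt τ) * (EL * EY)
                * (L ^ (1 - σ) * L ^ σ))) * e2
              + (-(2 * (γ + σ) * (2:ℝ) ^ (σ + γ - 1) * (jt τ) * (EL * EY)
                * (Y * Y ^ (σ + γ - 1)))) * e3
              + (-((jt τ) * (EL * EY) * (L ^ (1 - σ) * L ^ σ)
                * (Y ^ (γ / 2) * Y ^ (γ / 2) * Y ^ σ))) * hKdef
        _ ≤ (K * jt τ * (EL * EY) * L ^ (1 - σ) * L ^ σ * (Y ^ (γ / 2) * Y ^ σ))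
            * ((2:ℝ) ^ (γ / 2) * X ^ (γ / 2)) := hmul
        _ = (K * (2:ℝ) ^ (γ / 2)) * jt τ * L ^ (1 - σ) * X ^ (γ / 2) * Y ^ (γ / 2)
            * (EL * L ^ σ * (EY * Y ^ σ)) := by ring
    have hclaim2 : (K * (2:ℝ) ^ (γ / 2)) * jt τ * L ^ (1 - σ) * X ^ (γ / 2) * Y ^ (γ / 2)
            * (EL * L ^ σ * (EY * Y ^ σ))
        ≤ C * jt τ * (P + Q) * X ^ (γ / 2) * Y ^ (γ / 2)
            * (EL * L ^ σ * (EY * Y ^ σ)) := by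
      have hcoef : K * (2:ℝ) ^ (γ / 2) ≤ C := by
        have h1 : (0:ℝ) ≤ 2 * (3:ℝ) ^ σ := by positivity
        have h2 : (0:ℝ) ≤ 2 * (2:ℝ) ^ σ := by positivity
        rw [hCdef, hKdef]; linarith
      have hPQ : L ^ (1 - σ) ≤ P + Q := by linarith
      have h1 : (K * (2:ℝ) ^ (γ / 2)) * L ^ (1 - σ) ≤ C * (P + Q) :=
        mul_le_mul hcoef hPQ (Real.rpow_nonneg hL0.le _) hC0.le
      have h2 := mul_le_mul_of_nonneg_right h1
        (show (0:ℝ) ≤ jt τ * X ^ (γ / 2) * Y ^ (γ / 2) * (EL * L ^ σ * (EY * Y ^ σ)) by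
          positivity)
      calc (K * (2:ℝ) ^ (γ / 2)) * jt τ * L ^ (1 - σ) * X ^ (γ / 2) * Y ^ (γ / 2)
            * (EL * L ^ σ * (EY * Y ^ σ))
          = (K * (2:ℝ) ^ (γ / 2)) * L ^ (1 - σ)
            * (jt τ * X ^ (γ / 2) * Y ^ (γ / 2) * (EL * L ^ σ * (EY * Y ^ σ))) := by ring
        _ ≤ C * (P + Q)
            * (jt τ * X ^ (γ / 2) * Y ^ (γ / 2) * (EL * L ^ σ * (EY * Y ^ σ))) := h2
        _ = C * jt τ * (P + Q) * X ^ (γ / 2) * Y ^ (γ / 2)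
            * (EL * L ^ σ * (EY * Y ^ σ)) := by ring
    exact le_trans hstep (le_trans hclaim1 hclaim2)
end

section
/- Let σ > 1, t ≥ 0, and k, l ∈ ℤ³ with l ≠ 0 and k ≠ l. Define Δ_{k,l}(t) := sqrt(1 + |k−l|² + |k×l|²·t²/|l|²), where k×l is the cross product. Then ∫_{t/2}^{t} (1 + |k−l|² + |k·t − l·s|²)^{−σ/2} · |l| ds ≤ Δ_{k,l}(t)^{−σ+1} · ∫_{−∞}^{∞} (1 + r²)^{−σ/2} dr, where k·t − l·s denotes the vector kt − ls ∈ ℝ³ and |·| the Euclidean norm. In particular, since |k−l| ≥ 1, the left-hand side is bounded by C_σ · ⟨k−l⟩^{−σ+1} with C_σ = ∫_ℝ (1+r²)^{−σ/2} dr and ⟨k−l⟩ = sqrt(1+|k−l|²). -/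
open MeasureTheory
open scoped Matrix

set_option maxHeartbeats 1000000 in
/-- Resonance line-integral bound (Case 2b(3) of Lemma 4.4):
`∫_{t/2}^t ⟨k−l, kt−ls⟩^{−σ} |l| ds ≤ Δ_{k,l}(t)^{−σ+1} ∫_ℝ (1+r²)^{−σ/2} dr`,
with `Δ_{k,l}(t) = sqrt(1 + |k−l|² + |k×l|² t²/|l|²)`; in particular, since
`|k−l| ≥ 1`, the integral is bounded by `C_σ ⟨k−l⟩^{−σ+1}`. -/
theorem resonance_line_integral_bound (σ : ℝ) (hσ : 1 < σ) (t : ℝ) (ht : 0 ≤ t)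
    (k l : Fin 3 → ℤ) (hl : l ≠ 0) (hkl : k ≠ l) :
    let kr : Fin 3 → ℝ := fun i => (k i : ℝ)
    let lr : Fin 3 → ℝ := fun i => (l i : ℝ)
    let Δ : ℝ := Real.sqrt (1 + (∑ i, (kr i - lr i) ^ 2) +
      (∑ i, (crossProduct kr lr) i ^ 2) * t ^ 2 / (∑ i, (lr i) ^ 2))
    (∫ s in (t / 2)..t,
        (1 + (∑ i, (kr i - lr i) ^ 2) + ∑ i, (kr i * t - lr i * s) ^ 2) ^ (-(σ / 2)) *
          Real.sqrt (∑ i, (lr i) ^ 2))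
      ≤ Δ ^ (-σ + 1) * ∫ r : ℝ, (1 + r ^ 2) ^ (-(σ / 2)) ∧
    (∫ s in (t / 2)..t,
        (1 + (∑ i, (kr i - lr i) ^ 2) + ∑ i, (kr i * t - lr i * s) ^ 2) ^ (-(σ / 2)) *
          Real.sqrt (∑ i, (lr i) ^ 2))
      ≤ (∫ r : ℝ, (1 + r ^ 2) ^ (-(σ / 2))) *
          Real.sqrt (1 + ∑ i, (kr i - lr i) ^ 2) ^ (-σ + 1) := by
  intro kr lr Δ
  -- basic quantities
  set L2 : ℝ := ∑ i, (lr i) ^ 2 with hL2def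
  set L : ℝ := Real.sqrt L2 with hLdef
  set A : ℝ := 1 + ∑ i, (kr i - lr i) ^ 2 with hAdef
  set X : ℝ := ∑ i, (crossProduct kr lr) i ^ 2 with hXdef
  set P : ℝ := ∑ i, kr i * lr i with hPdef
  have hL2pos : 0 < L2 := by
    obtain ⟨i, hi⟩ := Function.ne_iff.1 hl
    have : (0:ℝ) < (lr i) ^ 2 := by
      have : (lr i) ≠ 0 := by simpa [lr] using hi
      positivity
    refine lt_of_lt_of_le this ?_
    exact Finset.single_le_sum (f := fun j => (lr j) ^ 2)
      (fun j _ => sq_nonneg _) (Finset.mem_univ i)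
  have hLpos : 0 < L := Real.sqrt_pos.2 hL2pos
  have hLsq : L ^ 2 = L2 := Real.sq_sqrt hL2pos.le
  have hXnonneg : 0 ≤ X := Finset.sum_nonneg fun i _ => sq_nonneg _
  have hA1 : 1 ≤ A := by
    have : 0 ≤ ∑ i, (kr i - lr i) ^ 2 := Finset.sum_nonneg fun i _ => sq_nonneg _
    rw [hAdef]; linarith
  set B : ℝ := A + X * t ^ 2 / L2 with hBdef
  have hB1 : 1 ≤ B := by
    have : 0 ≤ X * t ^ 2 / L2 := by positivity
    rw [hBdef]; linarith
  have hBpos : 0 < B := lt_of_lt_of_le one_pos hB1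
  have hΔdef : Δ = Real.sqrt B := by rw [hBdef, hAdef]
  clear_value Δ
  have hΔ1 : 1 ≤ Δ := by
    rw [hΔdef]
    simpa using Real.sqrt_le_sqrt hB1
  have hΔpos : 0 < Δ := lt_of_lt_of_le one_pos hΔ1
  have hΔsq : Δ ^ 2 = B := by rw [hΔdef]; exact Real.sq_sqrt hBpos.le
  set c : ℝ := P * t / L with hcdef
  -- Lagrange identity
  have lagrange : X + P ^ 2 = (∑ i, (kr i) ^ 2) * L2 := by
    simp only [hXdef, hPdef, hL2def, cross_apply, Fin.sum_univ_three]
    simp [Matrix.cons_val_zero, Matrix.cons_val_one]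
    ring
  -- completing the square
  have key : ∀ s : ℝ, A + ∑ i, (kr i * t - lr i * s) ^ 2 = B + (L * s - c) ^ 2 := by
    intro s
    have hLc : L * c = P * t := by
      rw [hcdef]; field_simp
    have hc2 : c ^ 2 = P ^ 2 * t ^ 2 / L2 := by
      rw [hcdef]; rw [div_pow, mul_pow, hLsq]
    have expand : ∑ i, (kr i * t - lr i * s) ^ 2 =
        (∑ i, (kr i) ^ 2) * t ^ 2 - 2 * P * t * s + L2 * s ^ 2 := by
      simp only [hPdef, hL2def, Fin.sum_univ_three]
      ring
    have sq : (L * s - c) ^ 2 = L2 * s ^ 2 - 2 * P * t * s + P ^ 2 * t ^ 2 / L2 := by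
      have : (L * s - c) ^ 2 = L ^ 2 * s ^ 2 - 2 * (L * c) * s + c ^ 2 := by ring
      rw [this, hLsq, hLc, hc2]; ring
    rw [expand, sq, hBdef]
    have : (∑ i, (kr i) ^ 2) * t ^ 2 = X * t ^ 2 / L2 + P ^ 2 * t ^ 2 / L2 := by
      field_simp
      nlinarith [lagrange]
    rw [this]; ring
  -- integrability of the profile
  have hg : Integrable (fun r : ℝ => (1 + r ^ 2) ^ (-(σ / 2))) := by
    have := integrable_rpow_neg_one_add_norm_sq (E := ℝ) (μ := volume)
      (r := σ) (by simpa using hσ)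
    simpa [neg_div, Real.norm_eq_abs, sq_abs] using this
  have hgnonneg : ∀ r : ℝ, 0 ≤ (1 + r ^ 2) ^ (-(σ / 2)) := fun r =>
    Real.rpow_nonneg (by positivity) _
  set C : ℝ := ∫ r : ℝ, (1 + r ^ 2) ^ (-(σ / 2)) with hCdef
  have hCnonneg : 0 ≤ C := integral_nonneg hgnonneg
  -- f and its relation to g
  set f : ℝ → ℝ := fun u => (B + u ^ 2) ^ (-(σ / 2)) with hfdef
  have hfg : ∀ u : ℝ, f u = Δ ^ (-σ) * (1 + (Δ⁻¹ * u) ^ 2) ^ (-(σ / 2)) := by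
    intro u
    have h1 : B + u ^ 2 = Δ ^ 2 * (1 + (Δ⁻¹ * u) ^ 2) := by
      have h2 : Δ ^ 2 * (1 + (Δ⁻¹ * u) ^ 2) = Δ ^ 2 + (Δ * Δ⁻¹) ^ 2 * u ^ 2 := by ring
      rw [h2, mul_inv_cancel₀ hΔpos.ne', hΔsq]; ring
    rw [hfdef]
    simp only [h1]
    rw [Real.mul_rpow (by positivity) (by positivity)]
    congr 1
    rw [← Real.rpow_natCast Δ 2, ← Real.rpow_mul hΔpos.le]
    congr 1
    push_cast
    ring
  have hf_int : Integrable f := by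
    have : Integrable (fun u : ℝ => (1 + (Δ⁻¹ * u) ^ 2) ^ (-(σ / 2))) :=
      hg.comp_mul_left' (inv_ne_zero hΔpos.ne')
    have h2 := this.const_mul (Δ ^ (-σ))
    refine h2.congr ?_
    filter_upwards with u
    exact (hfg u).symm
  have hf_nonneg : ∀ u : ℝ, 0 ≤ f u := fun u => Real.rpow_nonneg (by positivity) _
  -- total integral of f
  have hf_total : ∫ u : ℝ, f u = Δ ^ (-σ + 1) * C := by
    have h1 : ∫ u : ℝ, f u = Δ ^ (-σ) * ∫ u : ℝ, (1 + (Δ⁻¹ * u) ^ 2) ^ (-(σ / 2)) := by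
      simp_rw [hfg]
      exact integral_const_mul _ _
    rw [h1, MeasureTheory.Measure.integral_comp_mul_left
      (fun u : ℝ => (1 + u ^ 2) ^ (-(σ / 2))) Δ⁻¹]
    rw [inv_inv, abs_of_pos hΔpos, smul_eq_mul, ← hCdef, ← mul_assoc]
    congr 1
    rw [← Real.rpow_add_one hΔpos.ne' (-σ)]
  -- the interval integral equals an interval integral of f
  have step1 : (∫ s in (t / 2)..t,
      (1 + (∑ i, (kr i - lr i) ^ 2) + ∑ i, (kr i * t - lr i * s) ^ 2) ^ (-(σ / 2)) *
        Real.sqrt (∑ i, (lr i) ^ 2))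
      = ∫ u in (L * (t / 2) - c)..(L * t - c), f u := by
    have e1 : ∀ s : ℝ,
        (1 + (∑ i, (kr i - lr i) ^ 2) + ∑ i, (kr i * t - lr i * s) ^ 2) ^ (-(σ / 2)) *
          Real.sqrt (∑ i, (lr i) ^ 2) = f (L * s - c) * L := by
      intro s
      have := key s
      rw [hfdef]
      simp only [← hAdef, ← hL2def, ← hLdef]
      rw [show 1 + (∑ i, (kr i - lr i) ^ 2) + ∑ i, (kr i * t - lr i * s) ^ 2
        = A + ∑ i, (kr i * t - lr i * s) ^ 2 by rw [hAdef], this]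
    simp_rw [e1]
    rw [intervalIntegral.integral_mul_const,
      intervalIntegral.integral_comp_mul_sub f hLpos.ne' c, smul_eq_mul]
    field_simp
  -- bound the interval integral by the total integral
  have step2 : (∫ u in (L * (t / 2) - c)..(L * t - c), f u) ≤ ∫ u : ℝ, f u := by
    have hab : L * (t / 2) - c ≤ L * t - c := by
      have : L * (t / 2) ≤ L * t := by nlinarith
      linarith
    rw [intervalIntegral.integral_of_le hab]
    exact setIntegral_le_integral hf_int (Filter.Eventually.of_forall hf_nonneg)
  have main : (∫ s in (t / 2)..t,
      (1 + (∑ i, (kr i - lr i) ^ 2) + ∑ i, (kr i * t - lr i * s) ^ 2) ^ (-(σ / 2)) *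
        Real.sqrt (∑ i, (lr i) ^ 2)) ≤ Δ ^ (-σ + 1) * C := by
    rw [step1, ← hf_total]; exact step2
  refine ⟨main, main.trans ?_⟩
  rw [mul_comm]
  apply mul_le_mul_of_nonneg_left ?_ hCnonneg
  apply Real.rpow_le_rpow_of_nonpos
  · exact Real.sqrt_pos.2 (by linarith)
  · rw [hΔdef]
    apply Real.sqrt_le_sqrt
    have h0 : 0 ≤ X * t ^ 2 / L2 := by positivity
    rw [hBdef]; linarith
  · linarith
end
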